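/- arXiv:0712.0552 — 4 statements merged into one kernel-verified Lean document; each statement's English description precedes it below -/
import Mathlib

section
/- Let T ⊆ ℝⁿ be a brick and f : T → ℝ. If (gₘ) and (hₘ) are two sequences of step functions on T, each converging nearly uniformly to f, then both limits lim_{m→∞} ∫_T gₘ and lim_{m→∞} ∫_T hₘ exist and are equal. (Hence the K-integral is well defined.) -/
open Set Filter MeasureTheory Topology

/-- A brick in ℝⁿ: a product of `n` bounded intervals. -/
def IsBrick {n : ℕ} (S : Set (Fin n → ℝ)) : Prop :=
  ∃ I : Fin n → Set ℝ,
    (∀ k, (I k).OrdConnected ∧ Bornology.IsBounded (I k)) ∧ S = Set.univ.pi I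

/-- The volume of a brick: the product of the lengths of its sides. -/
noncomputable def brickVol {n : ℕ} (S : Set (Fin n → ℝ)) : ℝ :=
  ∏ k : Fin n, (sSup ((fun x => x k) '' S) - sInf ((fun x => x k) '' S))

/-- A representation of a step function on `T`: a finite linear combination of
characteristic functions of bricks contained in `T`. -/
structure StepRepr {n : ℕ} (T : Set (Fin n → ℝ)) where
  M : ℕ
  c : Fin M → ℝ
  B : Fin M → Set (Fin n → ℝ)
  isBrick : ∀ j, IsBrick (B j)
  subset : ∀ j, B j ⊆ T

/-- The step function determined by a representation. -/
noncomputable def StepRepr.fn {n : ℕ} {T : Set (Fin n → ℝ)} (g : StepRepr T) :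
    (Fin n → ℝ) → ℝ :=
  fun x => ∑ j, g.c j * (g.B j).indicator (fun _ => (1 : ℝ)) x

/-- The integral of a step function. -/
noncomputable def StepRepr.integral {n : ℕ} {T : Set (Fin n → ℝ)} (g : StepRepr T) : ℝ :=
  ∑ j, g.c j * brickVol (g.B j)

/-- The sequence `F` converges nearly uniformly to `f` on `T`: it is uniformly bounded
on `T`, and for every `δ > 0` there are finitely many bricks (contained in `T`) of total
volume `< δ` such that `F` converges uniformly to `f` on the complement of their union. -/
def NearlyUniformlyTo {n : ℕ} (T : Set (Fin n → ℝ)) (F : ℕ → (Fin n → ℝ) → ℝ)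
    (f : (Fin n → ℝ) → ℝ) : Prop :=
  (∃ C : ℝ, ∀ m, ∀ x ∈ T, |F m x| ≤ C) ∧
  ∀ δ > (0 : ℝ), ∃ (M : ℕ) (B : Fin M → Set (Fin n → ℝ)),
    (∀ j, IsBrick (B j) ∧ B j ⊆ T) ∧ (∑ j, brickVol (B j)) < δ ∧
    TendstoUniformlyOn F f atTop (T \ ⋃ j, B j)

/-- `f` is K-integrable on `T`: some sequence of step functions converges nearly
uniformly to `f`. -/
def KIntegrable {n : ℕ} (T : Set (Fin n → ℝ)) (f : (Fin n → ℝ) → ℝ) : Prop :=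
  ∃ g : ℕ → StepRepr T, NearlyUniformlyTo T (fun m => (g m).fn) f

/-- `f` is K-integrable on `T` with K-integral `I`: some sequence of step functions
converges nearly uniformly to `f` and their integrals tend to `I`. -/
def HasKIntegral {n : ℕ} (T : Set (Fin n → ℝ)) (f : (Fin n → ℝ) → ℝ) (I : ℝ) : Prop :=
  ∃ g : ℕ → StepRepr T, NearlyUniformlyTo T (fun m => (g m).fn) f ∧
    Filter.Tendsto (fun m => (g m).integral) Filter.atTop (nhds I)

lemma interval_facts {I : Set ℝ} (hoc : I.OrdConnected) (hbd : Bornology.IsBounded I) :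
    MeasurableSet I ∧ volume I = ENNReal.ofReal (sSup I - sInf I) := by
  rcases I.eq_empty_or_nonempty with rfl | hne
  · simp [Real.sSup_empty, Real.sInf_empty]
  obtain ⟨hbb, hba⟩ := (isBounded_iff_bddBelow_bddAbove).1 hbd
  set a := sInf I with ha
  set b := sSup I with hb
  have hIoo : Ioo a b ⊆ I := by
    intro x hx
    obtain ⟨y, hy, hyx⟩ := exists_lt_of_csInf_lt hne hx.1
    obtain ⟨z, hz, hxz⟩ := exists_lt_of_lt_csSup hne hx.2
    exact hoc.out hy hz ⟨hyx.le, hxz.le⟩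
  have hIcc : I ⊆ Icc a b := fun x hx => ⟨csInf_le hbb hx, le_csSup hba hx⟩
  have hd : I \ Ioo a b ⊆ {a, b} := by
    intro x ⟨hx1, hx2⟩
    have := hIcc hx1
    rcases lt_or_eq_of_le this.1 with h1 | h1
    · rcases lt_or_eq_of_le this.2 with h2 | h2
      · exact absurd ⟨h1, h2⟩ hx2
      · exact Or.inr h2
    · exact Or.inl h1.symm
  have hmeas : MeasurableSet I := by
    have : I = Ioo a b ∪ (I \ Ioo a b) := by
      ext x; constructor
      · intro hx; by_cases hx2 : x ∈ Ioo a b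
        · exact Or.inl hx2
        · exact Or.inr ⟨hx, hx2⟩
      · rintro (hx | hx); exacts [hIoo hx, hx.1]
    rw [this]
    exact measurableSet_Ioo.union ((((Set.finite_singleton b).insert a).subset hd).measurableSet)
  refine ⟨hmeas, le_antisymm ?_ ?_⟩
  · calc volume I ≤ volume (Icc a b) := measure_mono hIcc
      _ = ENNReal.ofReal (b - a) := Real.volume_Icc
  · calc ENNReal.ofReal (b - a) = volume (Ioo a b) := Real.volume_Ioo.symm
      _ ≤ volume I := measure_mono hIoo

lemma brick_facts {n : ℕ} (hn : 1 ≤ n) {B : Set (Fin n → ℝ)} (hB : IsBrick B) :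
    MeasurableSet B ∧ volume B = ENNReal.ofReal (brickVol B) ∧ 0 ≤ brickVol B := by
  obtain ⟨I, hI, rfl⟩ := hB
  have hmeasI : ∀ k, MeasurableSet (I k) := fun k => (interval_facts (hI k).1 (hI k).2).1
  have hmeas : MeasurableSet (Set.univ.pi I) := MeasurableSet.univ_pi hmeasI
  rcases (Set.univ.pi I).eq_empty_or_nonempty with he | hne
  · have hbv : brickVol (Set.univ.pi I) = 0 := by
      unfold brickVol
      rw [he]
      simp only [Set.image_empty, Real.sSup_empty, Real.sInf_empty, sub_zero]
      exact Finset.prod_eq_zero (Finset.mem_univ ⟨0, hn⟩) rfl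
    rw [he] at hbv ⊢
    simp [hbv]
  · have himg : ∀ k, (fun x => x k) '' (Set.univ.pi I) = I k := fun k =>
      Set.eval_image_univ_pi hne
    have hvol : volume (Set.univ.pi I) = ∏ k, volume (I k) := volume_pi_pi I
    have hnonneg : ∀ k, 0 ≤ sSup (I k) - sInf (I k) := by
      intro k
      have hk : (I k).Nonempty := by
        obtain ⟨x, hx⟩ := hne; exact ⟨x k, hx k (Set.mem_univ k)⟩
      have hbb := (isBounded_iff_bddBelow_bddAbove).1 (hI k).2
      linarith [csInf_le_csSup hk hbb.1 hbb.2]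
    have hbv : brickVol (Set.univ.pi I) = ∏ k, (sSup (I k) - sInf (I k)) := by
      unfold brickVol; exact Finset.prod_congr rfl fun k _ => by rw [himg k]
    refine ⟨hmeas, ?_, ?_⟩
    · rw [hvol, hbv, ENNReal.ofReal_prod_of_nonneg (fun k _ => hnonneg k)]
      exact Finset.prod_congr rfl fun k _ => (interval_facts (hI k).1 (hI k).2).2
    · rw [hbv]; exact Finset.prod_nonneg fun k _ => hnonneg k

lemma step_integrable {n : ℕ} (hn : 1 ≤ n) {T : Set (Fin n → ℝ)} (p : StepRepr T) :
    Integrable p.fn volume := by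
  unfold StepRepr.fn
  refine integrable_finset_sum _ fun j _ => Integrable.const_mul ?_ _
  obtain ⟨hm, hv, _⟩ := brick_facts hn (p.isBrick j)
  rw [integrable_indicator_iff hm]
  exact integrableOn_const (ne_of_lt (hv ▸ ENNReal.ofReal_lt_top))

lemma step_integral {n : ℕ} (hn : 1 ≤ n) {T : Set (Fin n → ℝ)} (p : StepRepr T) :
    ∫ x, p.fn x = p.integral := by
  unfold StepRepr.fn StepRepr.integral
  rw [integral_finset_sum]
  · refine Finset.sum_congr rfl fun j _ => ?_
    obtain ⟨hm, hv, hnn⟩ := brick_facts hn (p.isBrick j)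
    rw [integral_const_mul, integral_indicator_const (1 : ℝ) hm, measureReal_def, hv, smul_eq_mul, mul_one,
      ENNReal.toReal_ofReal hnn]
  · intro j _
    refine Integrable.const_mul ?_ _
    obtain ⟨hm, hv, _⟩ := brick_facts hn (p.isBrick j)
    rw [integrable_indicator_iff hm]
    exact integrableOn_const (ne_of_lt (hv ▸ ENNReal.ofReal_lt_top))

lemma step_fn_zero {n : ℕ} {T : Set (Fin n → ℝ)} (p : StepRepr T) {x} (hx : x ∉ T) :
    p.fn x = 0 := by
  unfold StepRepr.fn
  refine Finset.sum_eq_zero fun j _ => ?_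
  rw [Set.indicator_of_notMem (fun h => hx (p.subset j h)), mul_zero]

lemma key_est {n : ℕ} (hn : 1 ≤ n) {T : Set (Fin n → ℝ)} (hT : IsBrick T)
    (p q : StepRepr T) (U : Set (Fin n → ℝ)) (hU : MeasurableSet U)
    (ε' D δ : ℝ) (hε' : 0 ≤ ε') (hD : 0 ≤ D) (hδ : 0 ≤ δ)
    (hUvol : volume U ≤ ENNReal.ofReal δ)
    (hsmall : ∀ x ∈ T \ U, |p.fn x - q.fn x| ≤ ε')
    (hbig : ∀ x ∈ T, |p.fn x - q.fn x| ≤ D) :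
    |p.integral - q.integral| ≤ ε' * (volume T).toReal + D * δ := by
  obtain ⟨hTm, hTv, _⟩ := brick_facts hn hT
  have hip := step_integrable hn p
  have hiq := step_integrable hn q
  set ψ : (Fin n → ℝ) → ℝ :=
    fun x => ε' * (T \ U).indicator (fun _ => (1:ℝ)) x + D * U.indicator (fun _ => (1:ℝ)) x
    with hψ
  have hψint : Integrable ψ := by
    refine Integrable.add (Integrable.const_mul ?_ _) (Integrable.const_mul ?_ _)
    · rw [integrable_indicator_iff (hTm.diff hU)]
      refine integrableOn_const (ne_of_lt ?_)
      exact lt_of_le_of_lt (measure_mono Set.diff_subset) (hTv ▸ ENNReal.ofReal_lt_top)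
    · rw [integrable_indicator_iff hU]
      exact integrableOn_const (ne_of_lt (lt_of_le_of_lt hUvol ENNReal.ofReal_lt_top))
  have hind : ∀ (s : Set (Fin n → ℝ)) x, (0:ℝ) ≤ s.indicator (fun _ => (1:ℝ)) x :=
    fun s x => Set.indicator_nonneg (fun _ _ => zero_le_one) x
  have hle : ∀ x, |p.fn x - q.fn x| ≤ ψ x := by
    intro x
    by_cases hxT : x ∈ T
    · by_cases hxU : x ∈ U
      · have h1 : (T \ U).indicator (fun _ => (1:ℝ)) x = 0 :=
          Set.indicator_of_notMem (fun h => h.2 hxU) _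
        have h2 : U.indicator (fun _ => (1:ℝ)) x = 1 := Set.indicator_of_mem hxU _
        have : ψ x = D := by rw [hψ]; dsimp only; rw [h1, h2]; ring
        rw [this]; exact hbig x hxT
      · have h1 : (T \ U).indicator (fun _ => (1:ℝ)) x = 1 :=
          Set.indicator_of_mem (show x ∈ T \ U from ⟨hxT, hxU⟩) _
        have h2 : U.indicator (fun _ => (1:ℝ)) x = 0 := Set.indicator_of_notMem hxU _
        have : ψ x = ε' := by rw [hψ]; dsimp only; rw [h1, h2]; ring
        rw [this]; exact hsmall x ⟨hxT, hxU⟩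
    · rw [step_fn_zero p hxT, step_fn_zero q hxT, sub_zero, abs_zero]
      have := hind (T \ U) x; have := hind U x
      rw [hψ]; dsimp only; nlinarith
  have hi1 : Integrable (fun x => ε' * (T \ U).indicator (fun _ => (1:ℝ)) x) volume := by
    refine Integrable.const_mul ?_ _
    rw [integrable_indicator_iff (hTm.diff hU)]
    refine integrableOn_const (ne_of_lt ?_)
    exact lt_of_le_of_lt (measure_mono Set.diff_subset) (hTv ▸ ENNReal.ofReal_lt_top)
  have hi2 : Integrable (fun x => D * U.indicator (fun _ => (1:ℝ)) x) volume := by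
    refine Integrable.const_mul ?_ _
    rw [integrable_indicator_iff hU]
    exact integrableOn_const (ne_of_lt (lt_of_le_of_lt hUvol ENNReal.ofReal_lt_top))
  calc |p.integral - q.integral| = |∫ x, (p.fn x - q.fn x)| := by
        rw [integral_sub hip hiq, step_integral hn p, step_integral hn q]
    _ ≤ ∫ x, |p.fn x - q.fn x| := by
        simpa [Real.norm_eq_abs] using
          norm_integral_le_integral_norm (fun x => p.fn x - q.fn x)
    _ ≤ ∫ x, ψ x := integral_mono ((hip.sub hiq).abs) hψint hle
    _ = ε' * (volume (T \ U)).toReal + D * (volume U).toReal := by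
        rw [hψ, integral_add hi1 hi2, integral_const_mul, integral_const_mul,
          integral_indicator_const (1 : ℝ) (hTm.diff hU), integral_indicator_const (1 : ℝ) hU,
          smul_eq_mul, smul_eq_mul, mul_one, mul_one, measureReal_def, measureReal_def]
    _ ≤ ε' * (volume T).toReal + D * δ := by
        have h1 : (volume (T \ U)).toReal ≤ (volume T).toReal :=
          ENNReal.toReal_mono (hTv ▸ ENNReal.ofReal_ne_top) (measure_mono Set.diff_subset)
        have h2 : (volume U).toReal ≤ δ := by
          have := ENNReal.toReal_mono ENNReal.ofReal_ne_top hUvol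
          rwa [ENNReal.toReal_ofReal hδ] at this
        exact add_le_add (mul_le_mul_of_nonneg_left h1 hε') (mul_le_mul_of_nonneg_left h2 hD)

lemma bricks_union {n : ℕ} (hn : 1 ≤ n) {M : ℕ} {B : Fin M → Set (Fin n → ℝ)}
    (hB : ∀ j, IsBrick (B j)) :
    MeasurableSet (⋃ j, B j) ∧
      volume (⋃ j, B j) ≤ ENNReal.ofReal (∑ j, brickVol (B j)) ∧
      0 ≤ ∑ j, brickVol (B j) := by
  have h1 : MeasurableSet (⋃ j, B j) :=
    MeasurableSet.iUnion fun j => (brick_facts hn (hB j)).1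
  have h3 : (0:ℝ) ≤ ∑ j, brickVol (B j) :=
    Finset.sum_nonneg fun j _ => (brick_facts hn (hB j)).2.2
  refine ⟨h1, ?_, h3⟩
  calc volume (⋃ j, B j) ≤ ∑ j, volume (B j) := measure_iUnion_fintype_le _ _
    _ = ∑ j, ENNReal.ofReal (brickVol (B j)) :=
        Finset.sum_congr rfl fun j _ => (brick_facts hn (hB j)).2.1
    _ = ENNReal.ofReal (∑ j, brickVol (B j)) :=
        (ENNReal.ofReal_sum_of_nonneg fun j _ => (brick_facts hn (hB j)).2.2).symm

/-- If two sequences of step functions on a brick `T` both converge nearly uniformly to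
`f`, then both sequences of integrals converge, to the same limit. -/
theorem kIntegral_well_defined {n : ℕ} (hn : 1 ≤ n) (T : Set (Fin n → ℝ))
    (hT : IsBrick T) (f : (Fin n → ℝ) → ℝ) (g h : ℕ → StepRepr T)
    (hg : NearlyUniformlyTo T (fun m => (g m).fn) f)
    (hh : NearlyUniformlyTo T (fun m => (h m).fn) f) :
    ∃ I : ℝ, Filter.Tendsto (fun m => (g m).integral) Filter.atTop (nhds I) ∧
      Filter.Tendsto (fun m => (h m).integral) Filter.atTop (nhds I) := by
  set V : ℝ := (volume T).toReal with hV
  have hV0 : 0 ≤ V := ENNReal.toReal_nonneg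
  obtain ⟨⟨Cg, hCg⟩, hg2⟩ := hg
  obtain ⟨⟨Ch, hCh⟩, hh2⟩ := hh
  set C : ℝ := max (max Cg Ch) 0 with hC
  have hC0 : 0 ≤ C := le_max_right _ _
  have hCg' : ∀ m, ∀ x ∈ T, |(g m).fn x| ≤ C :=
    fun m x hx => le_trans (hCg m x hx) (le_trans (le_max_left _ _) (le_max_left _ _))
  have hCh' : ∀ m, ∀ x ∈ T, |(h m).fn x| ≤ C :=
    fun m x hx => le_trans (hCh m x hx) (le_trans (le_max_right _ _) (le_max_left _ _))
  -- Cauchy criterion for a single nearly uniformly converging sequence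
  have cauchy : ∀ (p : ℕ → StepRepr T), (∀ m, ∀ x ∈ T, |(p m).fn x| ≤ C) →
      (∀ δ > (0:ℝ), ∃ (M : ℕ) (B : Fin M → Set (Fin n → ℝ)),
        (∀ j, IsBrick (B j) ∧ B j ⊆ T) ∧ (∑ j, brickVol (B j)) < δ ∧
        TendstoUniformlyOn (fun m => (p m).fn) f atTop (T \ ⋃ j, B j)) →
      CauchySeq (fun m => (p m).integral) := by
    intro p hCp hp
    rw [Metric.cauchySeq_iff]
    intro ε hε
    set ε' : ℝ := ε / (4 * (V + 1)) with hε'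
    set δ : ℝ := ε / (8 * (C + 1)) with hδ
    have hε'pos : 0 < ε' := by positivity
    have hδpos : 0 < δ := by positivity
    obtain ⟨M, B, hB, hBvol, hBconv⟩ := hp δ hδpos
    obtain ⟨hUm, hUvol, hUnn⟩ := bricks_union hn (fun j => (hB j).1)
    rw [Metric.tendstoUniformlyOn_iff] at hBconv
    obtain ⟨N, hN⟩ := Filter.eventually_atTop.1 (hBconv ε' hε'pos)
    refine ⟨N, fun m hm k hk => ?_⟩
    have hδ' : (∑ j, brickVol (B j)) ≤ δ := hBvol.le
    have hUvol' : volume (⋃ j, B j) ≤ ENNReal.ofReal δ :=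
      le_trans hUvol (ENNReal.ofReal_le_ofReal hδ')
    have hsmall : ∀ x ∈ T \ ⋃ j, B j, |(p m).fn x - (p k).fn x| ≤ 2 * ε' := by
      intro x hx
      have h1 := hN m hm x hx
      have h2 := hN k hk x hx
      rw [Real.dist_eq] at h1 h2
      calc |(p m).fn x - (p k).fn x|
          = |((p m).fn x - f x) + (f x - (p k).fn x)| := by ring_nf
        _ ≤ |(p m).fn x - f x| + |f x - (p k).fn x| := abs_add_le _ _
        _ ≤ ε' + ε' := add_le_add (by rw [abs_sub_comm]; exact h1.le) h2.le
        _ = 2 * ε' := by ring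
    have hbig : ∀ x ∈ T, |(p m).fn x - (p k).fn x| ≤ 2 * C := fun x hx =>
      le_trans (abs_sub _ _) (by linarith [hCp m x hx, hCp k x hx])
    have hest := key_est hn hT (p m) (p k) (⋃ j, B j) hUm (2 * ε') (2 * C) δ
      (by positivity) (by positivity) hδpos.le hUvol' hsmall hbig
    rw [Real.dist_eq]
    calc |(p m).integral - (p k).integral| ≤ 2 * ε' * V + 2 * C * δ := hest
      _ < ε := by
          have h1 : 2 * ε' * V ≤ ε / 2 := by
            have he : 2 * ε' * V = ε * (2 * V) / (4 * (V + 1)) := by rw [hε']; ring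
            rw [he, div_le_iff₀ (by positivity)]; nlinarith
          have h2 : 2 * C * δ < ε / 2 := by
            have he : 2 * C * δ = ε * (2 * C) / (8 * (C + 1)) := by rw [hδ]; ring
            rw [he, div_lt_iff₀ (by positivity)]; nlinarith
          linarith
  have cg : CauchySeq (fun m => (g m).integral) := cauchy g hCg' hg2
  have ch : CauchySeq (fun m => (h m).integral) := cauchy h hCh' hh2
  obtain ⟨Ig, hIg⟩ := cauchySeq_tendsto_of_complete cg
  obtain ⟨Ih, hIh⟩ := cauchySeq_tendsto_of_complete ch
  -- show the difference tends to 0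
  have hdiff : Filter.Tendsto (fun m => (g m).integral - (h m).integral) atTop (nhds 0) := by
    rw [Metric.tendsto_atTop]
    intro ε hε
    set ε' : ℝ := ε / (4 * (V + 1)) with hε'
    set δ : ℝ := ε / (16 * (C + 1)) with hδ
    have hε'pos : 0 < ε' := by positivity
    have hδpos : 0 < δ := by positivity
    obtain ⟨M1, B1, hB1, hB1vol, hB1conv⟩ := hg2 δ hδpos
    obtain ⟨M2, B2, hB2, hB2vol, hB2conv⟩ := hh2 δ hδpos
    obtain ⟨hU1m, hU1vol, _⟩ := bricks_union hn (fun j => (hB1 j).1)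
    obtain ⟨hU2m, hU2vol, _⟩ := bricks_union hn (fun j => (hB2 j).1)
    set U : Set (Fin n → ℝ) := (⋃ j, B1 j) ∪ ⋃ j, B2 j with hU
    have hUm : MeasurableSet U := hU1m.union hU2m
    have hUvol : volume U ≤ ENNReal.ofReal (2 * δ) := by
      calc volume U ≤ volume (⋃ j, B1 j) + volume (⋃ j, B2 j) := measure_union_le _ _
        _ ≤ ENNReal.ofReal (∑ j, brickVol (B1 j)) + ENNReal.ofReal (∑ j, brickVol (B2 j)) :=
            add_le_add hU1vol hU2vol
        _ ≤ ENNReal.ofReal δ + ENNReal.ofReal δ :=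
            add_le_add (ENNReal.ofReal_le_ofReal hB1vol.le) (ENNReal.ofReal_le_ofReal hB2vol.le)
        _ = ENNReal.ofReal (2 * δ) := by rw [← ENNReal.ofReal_add hδpos.le hδpos.le]; ring_nf
    have hc1 := (hB1conv.mono (show T \ U ⊆ T \ ⋃ j, B1 j from
      Set.diff_subset_diff_right Set.subset_union_left))
    have hc2 := (hB2conv.mono (show T \ U ⊆ T \ ⋃ j, B2 j from
      Set.diff_subset_diff_right Set.subset_union_right))
    rw [Metric.tendstoUniformlyOn_iff] at hc1 hc2
    obtain ⟨N1, hN1⟩ := Filter.eventually_atTop.1 (hc1 ε' hε'pos)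
    obtain ⟨N2, hN2⟩ := Filter.eventually_atTop.1 (hc2 ε' hε'pos)
    refine ⟨max N1 N2, fun m hm => ?_⟩
    have hm1 : N1 ≤ m := le_trans (le_max_left _ _) hm
    have hm2 : N2 ≤ m := le_trans (le_max_right _ _) hm
    have hsmall : ∀ x ∈ T \ U, |(g m).fn x - (h m).fn x| ≤ 2 * ε' := by
      intro x hx
      have h1 := hN1 m hm1 x hx
      have h2 := hN2 m hm2 x hx
      rw [Real.dist_eq] at h1 h2
      calc |(g m).fn x - (h m).fn x|
          = |((g m).fn x - f x) + (f x - (h m).fn x)| := by ring_nf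
        _ ≤ |(g m).fn x - f x| + |f x - (h m).fn x| := abs_add_le _ _
        _ ≤ ε' + ε' := add_le_add (by rw [abs_sub_comm]; exact h1.le) h2.le
        _ = 2 * ε' := by ring
    have hbig : ∀ x ∈ T, |(g m).fn x - (h m).fn x| ≤ 2 * C := fun x hx =>
      le_trans (abs_sub _ _) (by linarith [hCg' m x hx, hCh' m x hx])
    have hest := key_est hn hT (g m) (h m) U hUm (2 * ε') (2 * C) (2 * δ)
      (by positivity) (by positivity) (by positivity) hUvol hsmall hbig
    rw [Real.dist_eq, sub_zero]
    calc |(g m).integral - (h m).integral| ≤ 2 * ε' * V + 2 * C * (2 * δ) := hest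
      _ < ε := by
          have h1 : 2 * ε' * V ≤ ε / 2 := by
            have he : 2 * ε' * V = ε * (2 * V) / (4 * (V + 1)) := by rw [hε']; ring
            rw [he, div_le_iff₀ (by positivity)]; nlinarith
          have h2 : 2 * C * (2 * δ) < ε / 2 := by
            have he : 2 * C * (2 * δ) = ε * (4 * C) / (16 * (C + 1)) := by rw [hδ]; ring
            rw [he, div_lt_iff₀ (by positivity)]; nlinarith
          linarith
  refine ⟨Ig, hIg, ?_⟩
  have : Filter.Tendsto (fun m => (g m).integral - ((g m).integral - (h m).integral))
      atTop (nhds (Ig - 0)) := hIg.sub hdiff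
  rw [sub_zero] at this
  exact this.congr (fun m => by ring)
end

section
/- Let T ⊆ ℝⁿ be a brick, let C ⊆ T be a compact Jordan measurable set, and let f : T → ℝ be continuous on C and vanish on T \ C. Then f is K-integrable. -/
open Set Filter MeasureTheory Topology

/-- A Jordan null set: for each `ε > 0` it can be covered by finitely many bricks of
total volume less than `ε`. -/
def JordanNull {n : ℕ} (A : Set (Fin n → ℝ)) : Prop :=
  ∀ ε > (0 : ℝ), ∃ (M : ℕ) (B : Fin M → Set (Fin n → ℝ)),
    (∀ j, IsBrick (B j)) ∧ A ⊆ (⋃ j, B j) ∧ (∑ j, brickVol (B j)) < ε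


section Aux

lemma factor_bounded {n : ℕ} {I : Fin n → Set ℝ} (hI : ∀ k, Bornology.IsBounded (I k))
    {S : Set (Fin n → ℝ)} (hS : S ⊆ Set.univ.pi I) (k : Fin n) :
    Bornology.IsBounded ((fun x => x k) '' S) := by
  refine (hI k).subset ?_
  rintro _ ⟨x, hx, rfl⟩
  exact hS hx k (mem_univ k)

lemma factor_nonneg {n : ℕ} {I : Fin n → Set ℝ} (hI : ∀ k, Bornology.IsBounded (I k))
    {S : Set (Fin n → ℝ)} (hS : S ⊆ Set.univ.pi I) (k : Fin n) :
    0 ≤ sSup ((fun x => x k) '' S) - sInf ((fun x => x k) '' S) := by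
  rcases eq_empty_or_nonempty ((fun x => x k) '' S) with h | h
  · simp [h, Real.sSup_empty, Real.sInf_empty]
  · have hb := factor_bounded hI hS k
    have := csInf_le_csSup h hb.bddBelow hb.bddAbove
    linarith

lemma brickVol_nonneg {n : ℕ} {S : Set (Fin n → ℝ)} (hS : IsBrick S) : 0 ≤ brickVol S := by
  obtain ⟨I, hI, rfl⟩ := hS
  exact Finset.prod_nonneg fun k _ => factor_nonneg (fun k => (hI k).2) subset_rfl k

lemma brickVol_mono {n : ℕ} {S S' : Set (Fin n → ℝ)} (hS' : IsBrick S') (hsub : S ⊆ S') :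
    brickVol S ≤ brickVol S' := by
  obtain ⟨I, hI, rfl⟩ := hS'
  refine Finset.prod_le_prod (fun k _ => factor_nonneg (fun k => (hI k).2) hsub k) ?_
  intro k _
  rcases eq_empty_or_nonempty ((fun x => x k) '' S) with h | h
  · rw [h]
    simpa [Real.sSup_empty, Real.sInf_empty] using
      factor_nonneg (fun k => (hI k).2) (subset_rfl : Set.univ.pi I ⊆ _) k
  · have hb := factor_bounded (fun k => (hI k).2) (subset_rfl : Set.univ.pi I ⊆ _) k
    have himg : (fun x => x k) '' S ⊆ (fun x => x k) '' Set.univ.pi I := image_mono hsub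
    have h1 : sSup ((fun x => x k) '' S) ≤ sSup ((fun x => x k) '' Set.univ.pi I) :=
      csSup_le_csSup hb.bddAbove h himg
    have h2 : sInf ((fun x => x k) '' Set.univ.pi I) ≤ sInf ((fun x => x k) '' S) :=
      csInf_le_csInf hb.bddBelow h himg
    linarith

lemma IsBrick.inter {n : ℕ} {S S' : Set (Fin n → ℝ)} (hS : IsBrick S) (hS' : IsBrick S') :
    IsBrick (S ∩ S') := by
  obtain ⟨I, hI, rfl⟩ := hS
  obtain ⟨I', hI', rfl⟩ := hS'
  exact ⟨fun k => I k ∩ I' k,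
    fun k => ⟨(hI k).1.inter (hI' k).1, (hI k).2.subset inter_subset_left⟩,
    (Set.pi_inter_distrib).symm⟩

lemma brickVol_pi_Ioo {n : ℕ} {a b : Fin n → ℝ} (hab : ∀ k, a k < b k) :
    brickVol (Set.univ.pi fun k => Ioo (a k) (b k)) = ∏ k, (b k - a k) := by
  have hne : (Set.univ.pi fun k => Ioo (a k) (b k)).Nonempty :=
    univ_pi_nonempty_iff.2 fun k => nonempty_Ioo.2 (hab k)
  unfold brickVol
  refine Finset.prod_congr rfl fun k _ => ?_
  have : (fun x : Fin n → ℝ => x k) '' (Set.univ.pi fun k => Ioo (a k) (b k)) = Ioo (a k) (b k) :=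
    Set.eval_image_pi (mem_univ k) hne
  rw [this, csSup_Ioo (hab k), csInf_Ioo (hab k)]

lemma brick_enlarge {n : ℕ} (hn : 1 ≤ n) {S : Set (Fin n → ℝ)} (hS : IsBrick S)
    {ε : ℝ} (hε : 0 < ε) :
    ∃ a b : Fin n → ℝ, (∀ k, a k < b k) ∧ S ⊆ Set.univ.pi (fun k => Ioo (a k) (b k)) ∧
      brickVol (Set.univ.pi (fun k => Ioo (a k) (b k))) < brickVol S + ε := by
  obtain ⟨I, hI, rfl⟩ := hS
  rcases eq_empty_or_nonempty (Set.univ.pi I) with h | h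
  · -- empty brick
    set c : ℝ := min ε 1 / 2 with hc
    have hc0 : 0 < c := by positivity
    have hc1 : c ≤ 1 := by
      have := min_le_right ε 1; simp only [hc]; linarith
    refine ⟨fun _ => 0, fun _ => c, fun k => hc0, by simp [h], ?_⟩
    have hvol0 : brickVol (Set.univ.pi I) = 0 := by
      unfold brickVol
      refine Finset.prod_eq_zero (Finset.mem_univ ⟨0, hn⟩) ?_
      rw [h]
      simp [Real.sSup_empty, Real.sInf_empty]
    rw [hvol0, brickVol_pi_Ioo fun k => hc0]
    have : ∏ _k : Fin n, (c - 0) = c ^ n := by simp [Finset.prod_const]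
    rw [this]
    have hcn : c ^ n ≤ c := pow_le_of_le_one hc0.le hc1 (by omega)
    have : c < ε := by
      have := min_le_left ε 1; simp only [hc]; linarith
    linarith
  · have hne : ∀ k, (I k).Nonempty := by
      obtain ⟨x, hx⟩ := h
      exact fun k => ⟨x k, hx k (mem_univ k)⟩
    have hvol : brickVol (Set.univ.pi I) = ∏ k, (sSup (I k) - sInf (I k)) := by
      unfold brickVol
      exact Finset.prod_congr rfl fun k _ => by
        rw [Set.eval_image_pi (mem_univ k) h]
    set L : Fin n → ℝ := fun k => sSup (I k) - sInf (I k) with hL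
    have hcont : Continuous (fun η : ℝ => ∏ k, (L k + 2 * η)) := by
      exact continuous_finset_prod _ fun k _ => by continuity
    have hlt : (fun η : ℝ => ∏ k, (L k + 2 * η)) 0 < brickVol (Set.univ.pi I) + ε := by
      simp [hvol]; linarith
    have hev : ∀ᶠ η in 𝓝[>] (0:ℝ), (∏ k, (L k + 2 * η)) < brickVol (Set.univ.pi I) + ε := by
      have := (hcont.continuousAt (x := (0:ℝ))).eventually_lt continuousAt_const hlt
      exact nhdsWithin_le_nhds this
    obtain ⟨η, hη1, hη2⟩ := (hev.and self_mem_nhdsWithin).exists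
    refine ⟨fun k => sInf (I k) - η, fun k => sSup (I k) + η, ?_, ?_, ?_⟩
    · intro k
      have := csInf_le_csSup (hne k) (hI k).2.bddBelow (hI k).2.bddAbove
      have hη0 : (0:ℝ) < η := hη2
      dsimp only
      linarith
    · intro x hx k _
      have hxk := hx k (mem_univ k)
      have h1 := csInf_le (hI k).2.bddBelow hxk
      have h2 := le_csSup (hI k).2.bddAbove hxk
      have hη0 : (0:ℝ) < η := hη2
      exact ⟨by dsimp only; linarith, by dsimp only; linarith⟩
    · have hab : ∀ k, sInf (I k) - η < sSup (I k) + η := by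
        intro k
        have := csInf_le_csSup (hne k) (hI k).2.bddBelow (hI k).2.bddAbove
        have hη0 : (0:ℝ) < η := hη2
        linarith
      rw [brickVol_pi_Ioo hab]
      have : ∀ k, sSup (I k) + η - (sInf (I k) - η) = L k + 2 * η := fun k => by ring
      calc ∏ k, (sSup (I k) + η - (sInf (I k) - η)) = ∏ k, (L k + 2 * η) :=
            Finset.prod_congr rfl fun k _ => this k
        _ < brickVol (Set.univ.pi I) + ε := hη1

lemma preconnected_frontier {α : Type*} [TopologicalSpace α] {s K : Set α}
    (hs : IsPreconnected s) (h1 : (s ∩ K).Nonempty) (h2 : (s \ K).Nonempty) :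
    (s ∩ frontier K).Nonempty := by
  by_contra h
  push_neg at h
  have hmem : ∀ x ∈ s, x ∉ frontier K := fun x hx hfx =>
    (eq_empty_iff_forall_notMem.mp h x) ⟨hx, hfx⟩
  have key : ∀ x ∈ s, x ∈ interior K ∨ x ∈ interior Kᶜ := by
    intro x hx
    have hfx := hmem x hx
    rw [frontier, mem_diff] at hfx
    push_neg at hfx
    by_cases hK : x ∈ closure K
    · exact Or.inl (hfx hK)
    · right
      rw [interior_compl]
      exact hK
  have hcover : s ⊆ interior K ∪ interior Kᶜ := fun x hx => key x hx
  obtain ⟨y, hys, hyK⟩ := h1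
  obtain ⟨z, hzs, hzK⟩ := h2
  have hy : y ∈ interior K := by
    rcases key y hys with h' | h'
    · exact h'
    · exact absurd (interior_subset h' : y ∈ Kᶜ) (by simpa using hyK)
  have hz : z ∈ interior Kᶜ := by
    rcases key z hzs with h' | h'
    · exact absurd (interior_subset h') hzK
    · exact h'
  obtain ⟨w, hw⟩ := hs (interior K) (interior Kᶜ) isOpen_interior isOpen_interior hcover
    ⟨y, hys, hy⟩ ⟨z, hzs, hz⟩
  exact (by simpa using interior_subset hw.2.2 : w ∈ Kᶜ) (interior_subset hw.2.1)

/-- Length of the enlarged side interval. -/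
noncomputable def gridLen {n : ℕ} (I : Fin n → Set ℝ) (k : Fin n) : ℝ :=
  sSup (I k) + 1 - sInf (I k)

/-- Mesh along coordinate `k` at stage `m`. -/
noncomputable def gridH {n : ℕ} (I : Fin n → Set ℝ) (m : ℕ) (k : Fin n) : ℝ :=
  gridLen I k / (m + 1)

/-- Subinterval `i` of side `k` at stage `m`. -/
noncomputable def gridJ {n : ℕ} (I : Fin n → Set ℝ) (m : ℕ) (k : Fin n) (i : Fin (m+1)) :
    Set ℝ :=
  I k ∩ Ico (sInf (I k) + (i : ℕ) * gridH I m k) (sInf (I k) + ((i : ℕ) + 1) * gridH I m k)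

/-- A grid cell at stage `m`. -/
noncomputable def gridQ {n : ℕ} (I : Fin n → Set ℝ) (m : ℕ) (σ : Fin n → Fin (m+1)) :
    Set (Fin n → ℝ) :=
  Set.univ.pi fun k => gridJ I m k (σ k)

lemma one_le_gridLen {n : ℕ} {I : Fin n → Set ℝ} (hI : ∀ k, Bornology.IsBounded (I k))
    (k : Fin n) : 1 ≤ gridLen I k := by
  rcases eq_empty_or_nonempty (I k) with h | h
  · simp [gridLen, h, Real.sSup_empty, Real.sInf_empty]
  · have := csInf_le_csSup h (hI k).bddBelow (hI k).bddAbove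
    unfold gridLen; linarith

lemma gridH_pos {n : ℕ} {I : Fin n → Set ℝ} (hI : ∀ k, Bornology.IsBounded (I k))
    (m : ℕ) (k : Fin n) : 0 < gridH I m k := by
  have := one_le_gridLen hI k
  unfold gridH
  positivity

lemma gridJ_subset {n : ℕ} (I : Fin n → Set ℝ) (m : ℕ) (k : Fin n) (i : Fin (m+1)) :
    gridJ I m k i ⊆ I k := inter_subset_left

lemma gridJ_exists {n : ℕ} {I : Fin n → Set ℝ} (hI : ∀ k, Bornology.IsBounded (I k))
    (m : ℕ) (k : Fin n) {x : ℝ} (hx : x ∈ I k) : ∃ i : Fin (m+1), x ∈ gridJ I m k i := by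
  have hH := gridH_pos hI m k
  have hax : sInf (I k) ≤ x := csInf_le (hI k).bddBelow hx
  have hxb : x < sInf (I k) + gridLen I k := by
    have := le_csSup (hI k).bddAbove hx
    unfold gridLen; linarith
  have hnn : 0 ≤ (x - sInf (I k)) / gridH I m k := by
    apply div_nonneg (by linarith) hH.le
  set q : ℝ := (x - sInf (I k)) / gridH I m k with hq
  have h1 : (⌊q⌋₊ : ℝ) ≤ q := Nat.floor_le hnn
  have h2 : q < ⌊q⌋₊ + 1 := Nat.lt_floor_add_one q
  have hqm : q < m + 1 := by
    rw [hq, div_lt_iff₀ hH]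
    have : ((m:ℝ) + 1) * gridH I m k = gridLen I k := by
      unfold gridH; field_simp
    rw [this]; linarith
  have hfl : ⌊q⌋₊ < m + 1 := by
    rw [Nat.floor_lt hnn]
    exact_mod_cast hqm
  refine ⟨⟨⌊q⌋₊, hfl⟩, hx, ?_, ?_⟩
  · have : (⌊q⌋₊ : ℝ) * gridH I m k ≤ x - sInf (I k) := by
      rw [← le_div_iff₀ hH]; exact h1
    simpa using by linarith
  · have : x - sInf (I k) < ((⌊q⌋₊ : ℝ) + 1) * gridH I m k := by
      rw [← div_lt_iff₀ hH]; exact h2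
    simpa using by linarith

lemma gridJ_unique {n : ℕ} {I : Fin n → Set ℝ} (hI : ∀ k, Bornology.IsBounded (I k))
    (m : ℕ) (k : Fin n) {i i' : Fin (m+1)} {x : ℝ}
    (h : x ∈ gridJ I m k i) (h' : x ∈ gridJ I m k i') : i = i' := by
  have hH := gridH_pos hI m k
  obtain ⟨-, h1, h2⟩ := h
  obtain ⟨-, h1', h2'⟩ := h'
  have key : ∀ a b : ℕ, sInf (I k) + (a:ℝ) * gridH I m k ≤ x →
      x < sInf (I k) + ((b:ℝ) + 1) * gridH I m k → a ≤ b := by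
    intro a b ha hb
    have : (a:ℝ) * gridH I m k < ((b:ℝ) + 1) * gridH I m k := by linarith
    have : (a:ℝ) < (b:ℝ) + 1 := lt_of_mul_lt_mul_right this hH.le
    exact_mod_cast Nat.lt_add_one_iff.mp (by exact_mod_cast this)
  exact Fin.ext (le_antisymm (key _ _ h1 h2') (key _ _ h1' h2))

lemma gridJ_dist {n : ℕ} {I : Fin n → Set ℝ} (hI : ∀ k, Bornology.IsBounded (I k))
    (m : ℕ) (k : Fin n) {i : Fin (m+1)} {x y : ℝ}
    (h : x ∈ gridJ I m k i) (h' : y ∈ gridJ I m k i) : dist x y ≤ gridH I m k := by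
  obtain ⟨-, h1, h2⟩ := h
  obtain ⟨-, h1', h2'⟩ := h'
  rw [Real.dist_eq, abs_le]
  constructor <;> nlinarith [gridH_pos hI m k]

lemma gridQ_subset {n : ℕ} (I : Fin n → Set ℝ) (m : ℕ) (σ : Fin n → Fin (m+1)) :
    gridQ I m σ ⊆ Set.univ.pi I :=
  Set.pi_mono fun k _ => gridJ_subset I m k (σ k)

lemma gridQ_isBrick {n : ℕ} {I : Fin n → Set ℝ}
    (hI : ∀ k, (I k).OrdConnected ∧ Bornology.IsBounded (I k)) (m : ℕ)
    (σ : Fin n → Fin (m+1)) : IsBrick (gridQ I m σ) :=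
  ⟨fun k => gridJ I m k (σ k),
    fun k => ⟨(hI k).1.inter Set.ordConnected_Ico, (hI k).2.subset inter_subset_left⟩, rfl⟩

lemma gridQ_exists {n : ℕ} {I : Fin n → Set ℝ} (hI : ∀ k, Bornology.IsBounded (I k))
    (m : ℕ) {x : Fin n → ℝ} (hx : x ∈ Set.univ.pi I) :
    ∃ σ : Fin n → Fin (m+1), x ∈ gridQ I m σ := by
  have : ∀ k, ∃ i : Fin (m+1), x k ∈ gridJ I m k i :=
    fun k => gridJ_exists hI m k (hx k (mem_univ k))
  choose σ hσ using this
  exact ⟨σ, fun k _ => hσ k⟩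

lemma gridQ_unique {n : ℕ} {I : Fin n → Set ℝ} (hI : ∀ k, Bornology.IsBounded (I k))
    (m : ℕ) {σ σ' : Fin n → Fin (m+1)} {x : Fin n → ℝ}
    (h : x ∈ gridQ I m σ) (h' : x ∈ gridQ I m σ') : σ = σ' :=
  funext fun k => gridJ_unique hI m k (h k (mem_univ k)) (h' k (mem_univ k))

lemma gridQ_dist {n : ℕ} {I : Fin n → Set ℝ} (hI : ∀ k, Bornology.IsBounded (I k))
    (m : ℕ) {σ : Fin n → Fin (m+1)} {x y : Fin n → ℝ} {L : ℝ} (hL : ∀ k, gridLen I k ≤ L)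
    (hL0 : 0 ≤ L) (h : x ∈ gridQ I m σ) (h' : y ∈ gridQ I m σ) :
    dist x y ≤ L / (m + 1) := by
  rw [dist_pi_le_iff (by positivity)]
  intro k
  calc dist (x k) (y k) ≤ gridH I m k :=
        gridJ_dist hI m k (h k (mem_univ k)) (h' k (mem_univ k))
    _ ≤ L / (m + 1) := by
        unfold gridH
        gcongr
        exact hL k

end Aux

/-- If `f` is continuous on a compact Jordan measurable set `C ⊆ T` and vanishes on
`T \ C`, then `f` is K-integrable on `T`. -/
theorem kIntegrable_of_continuousOn_compact {n : ℕ} (hn : 1 ≤ n) (T : Set (Fin n → ℝ))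
    (hT : IsBrick T) (C : Set (Fin n → ℝ)) (hCT : C ⊆ T) (hC : IsCompact C)
    (hCb : Bornology.IsBounded C) (hCj : JordanNull (frontier C))
    (f : (Fin n → ℝ) → ℝ) (hf : ContinuousOn f C) (h0 : ∀ x ∈ T \ C, f x = 0) :
    KIntegrable T f := by
  classical
  obtain ⟨I, hI, hTI⟩ := hT
  have hIb : ∀ k, Bornology.IsBounded (I k) := fun k => (hI k).2
  haveI : Nonempty (Fin n) := Fin.pos_iff_nonempty.mp hn
  -- bound on f
  obtain ⟨K0, hK0⟩ := hC.exists_bound_of_continuousOn hf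
  set K : ℝ := max K0 0 with hK
  -- max side length
  set L : ℝ := Finset.univ.sup' Finset.univ_nonempty (fun k => gridLen I k) with hLdef
  have hL : ∀ k, gridLen I k ≤ L := fun k => Finset.le_sup' _ (Finset.mem_univ k)
  have hL0 : (0:ℝ) < L := lt_of_lt_of_le one_pos (le_trans (one_le_gridLen hIb ⟨0, hn⟩)
    (hL ⟨0, hn⟩))
  -- the coefficients
  set cc : ∀ m : ℕ, (Fin n → Fin (m+1)) → ℝ := fun m σ =>
    if hQ : (gridQ I m σ ∩ C).Nonempty then f hQ.choose else 0 with hcc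
  -- the step functions
  set g : ℕ → StepRepr T := fun m =>
    { M := Fintype.card (Fin n → Fin (m+1))
      c := fun j => cc m ((Fintype.equivFin (Fin n → Fin (m+1))).symm j)
      B := fun j => gridQ I m ((Fintype.equivFin (Fin n → Fin (m+1))).symm j)
      isBrick := fun j => gridQ_isBrick hI m _
      subset := fun j => hTI ▸ gridQ_subset I m _ } with hg
  -- evaluation of the step function
  have hfn : ∀ (m : ℕ) (x : Fin n → ℝ) (σ : Fin n → Fin (m+1)), x ∈ gridQ I m σ →
      (g m).fn x = cc m σ := by
    intro m x σ hσ
    show (∑ j, _) = _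
    rw [Equiv.sum_comp ((Fintype.equivFin (Fin n → Fin (m+1))).symm)
      (fun τ => cc m τ * (gridQ I m τ).indicator (fun _ => (1:ℝ)) x)]
    rw [Finset.sum_eq_single σ]
    · rw [indicator_of_mem hσ, mul_one]
    · intro τ _ hτ
      rw [indicator_of_notMem, mul_zero]
      intro hmem
      exact hτ (gridQ_unique hIb m hmem hσ)
    · intro h; exact absurd (Finset.mem_univ σ) h
  -- bound on coefficients
  have hccK : ∀ (m : ℕ) (σ : Fin n → Fin (m+1)), |cc m σ| ≤ K := by
    intro m σ
    rw [hcc]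
    dsimp only
    split_ifs with hQ
    · have hmem : hQ.choose ∈ C := hQ.choose_spec.2
      calc |f hQ.choose| ≤ K0 := by simpa [Real.norm_eq_abs] using hK0 _ hmem
        _ ≤ K := le_max_left _ _
    · simp [hK]
  refine ⟨g, ⟨K, ?_⟩, ?_⟩
  · -- uniform bound
    intro m x hx
    obtain ⟨σ, hσ⟩ := gridQ_exists hIb m (hTI ▸ hx)
    show |(g m).fn x| ≤ K
    rw [hfn m x σ hσ]
    exact hccK m σ
  · -- near-uniform convergence
    intro δ hδ
    obtain ⟨M', B0, hB0brick, hB0cover, hB0vol⟩ := hCj (δ/2) (by linarith)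
    have hchoice : ∀ j : Fin M', ∃ a b : Fin n → ℝ, (∀ k, a k < b k) ∧
        B0 j ⊆ Set.univ.pi (fun k => Ioo (a k) (b k)) ∧
        brickVol (Set.univ.pi (fun k => Ioo (a k) (b k)))
          < brickVol (B0 j) + δ / (2 * (M' + 1)) :=
      fun j => brick_enlarge hn (hB0brick j) (by positivity)
    choose a b hab hBsub hBvol using hchoice
    set U : Fin M' → Set (Fin n → ℝ) := fun j => Set.univ.pi fun k => Ioo (a j k) (b j k)
      with hU
    set B : Fin M' → Set (Fin n → ℝ) := fun j => U j ∩ T with hB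
    have hUbrick : ∀ j, IsBrick (U j) := fun j =>
      ⟨fun k => Ioo (a j k) (b j k),
        fun k => ⟨Set.ordConnected_Ioo, Metric.isBounded_Ioo _ _⟩, rfl⟩
    refine ⟨M', B, fun j => ⟨(hUbrick j).inter ⟨I, hI, hTI⟩, inter_subset_right⟩, ?_, ?_⟩
    · -- total volume
      have h1 : ∀ j, brickVol (B j) < brickVol (B0 j) + δ / (2 * (M' + 1)) := fun j =>
        lt_of_le_of_lt (brickVol_mono (hUbrick j) inter_subset_left) (hBvol j)
      calc (∑ j, brickVol (B j)) ≤ ∑ j, (brickVol (B0 j) + δ / (2 * (M' + 1))) :=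
            Finset.sum_le_sum fun j _ => (h1 j).le
        _ = (∑ j, brickVol (B0 j)) + M' * (δ / (2 * (M' + 1))) := by
            rw [Finset.sum_add_distrib, Finset.sum_const, Finset.card_univ,
              Fintype.card_fin, nsmul_eq_mul]
        _ < δ/2 + δ/2 := by
            have h2 : (M':ℝ) * (δ / (2 * (M' + 1))) ≤ δ / 2 := by
              have hM : (0:ℝ) ≤ M' := Nat.cast_nonneg M'
              calc (M':ℝ) * (δ / (2 * (M' + 1))) = (M' * δ) / (2 * (M' + 1)) := by ring
                _ ≤ δ / 2 := by
                    rw [div_le_div_iff₀ (by positivity) (by norm_num)]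
                    nlinarith
            linarith
        _ = δ := by ring
    · -- uniform convergence off the bricks
      -- distance from the bad set to the frontier
      have hfrC : IsCompact (frontier C) :=
        hC.of_isClosed_subset isClosed_frontier hC.isClosed.frontier_subset
      have hUopen : IsOpen (⋃ j, U j) := isOpen_iUnion fun j =>
        isOpen_set_pi finite_univ fun k _ => isOpen_Ioo
      have hfrsub : frontier C ⊆ ⋃ j, U j :=
        hB0cover.trans (iUnion_mono fun j => hBsub j)
      obtain ⟨d, hd0, hdsub⟩ := hfrC.exists_thickening_subset_open hUopen hfrsub
      have hfar : ∀ x ∈ T \ ⋃ j, B j, ∀ w ∈ frontier C, d ≤ dist x w := by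
        intro x hx w hw
        by_contra hlt
        push_neg at hlt
        have : x ∈ Metric.thickening d (frontier C) :=
          Metric.mem_thickening_iff.mpr ⟨w, hw, hlt⟩
        obtain ⟨j, hj⟩ := mem_iUnion.mp (hdsub this)
        exact hx.2 (mem_iUnion.mpr ⟨j, hj, hx.1⟩)
      -- uniform continuity of f on C
      have hfu : UniformContinuousOn f C := hC.uniformContinuousOn_of_continuous hf
      rw [Metric.tendstoUniformlyOn_iff]
      intro ε hε
      obtain ⟨d0, hd00, hd0f⟩ := Metric.uniformContinuousOn_iff.mp hfu ε hε
      set r : ℝ := min d d0 with hr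
      have hr0 : 0 < r := lt_min hd0 hd00
      obtain ⟨m₀, hm₀⟩ := exists_nat_gt (L / r)
      have hmesh : ∀ m ≥ m₀, L / (m + 1) < r := by
        intro m hm
        rw [div_lt_iff₀ (by positivity)]
        have h1 : L / r < m + 1 := lt_of_lt_of_le hm₀ (by exact_mod_cast Nat.le_succ_of_le hm)
        calc L = (L / r) * r := by field_simp
          _ < (m + 1) * r := by
              exact mul_lt_mul_of_pos_right h1 hr0
          _ = r * (m+1) := by ring
      filter_upwards [eventually_ge_atTop m₀] with m hm
      intro x hx
      obtain ⟨σ, hσ⟩ := gridQ_exists hIb m (hTI ▸ hx.1)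
      rw [hfn m x σ hσ, hcc]
      dsimp only
      split_ifs with hQ
      · -- cell meets C
        set y := hQ.choose with hy
        have hyQ : y ∈ gridQ I m σ := hQ.choose_spec.1
        have hyC : y ∈ C := hQ.choose_spec.2
        have hdxy : dist x y < r := lt_of_le_of_lt
          (gridQ_dist hIb m hL hL0.le hσ hyQ) (hmesh m hm)
        by_cases hxC : x ∈ C
        · exact hd0f x hxC y hyC (lt_of_lt_of_le hdxy (min_le_right d d0))
        · exfalso
          -- segment from x to y crosses the frontier
          obtain ⟨w, hwseg, hwfr⟩ := preconnected_frontier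
            ((convex_segment x y).isPreconnected)
            ⟨y, right_mem_segment ℝ x y, hyC⟩ ⟨x, left_mem_segment ℝ x y, hxC⟩
          have hdw : dist x w ≤ dist x y := by
            have := dist_add_dist_of_mem_segment hwseg
            have h2 : (0:ℝ) ≤ dist w y := dist_nonneg
            linarith
          have : d ≤ dist x w := hfar x hx w hwfr
          have : d ≤ dist x y := le_trans this hdw
          have : d < r := lt_of_le_of_lt this hdxy
          exact absurd this (not_lt.mpr (min_le_left d d0))
      · -- cell misses C: f x = 0
        have hxC : x ∉ C := fun hxC => hQ ⟨x, hσ, hxC⟩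
        rw [h0 x ⟨hx.1, hxC⟩]
        simpa using hε
end

section
/- Let T ⊆ ℝⁿ be a brick with nonempty interior. There is no topology on the set of K-integrable functions T → ℝ whose convergent sequences are exactly the nearly uniformly convergent sequences; i.e., for every topology τ on the set of K-integrable functions there exist a sequence (fₘ) and a function f such that (fₘ → f nearly uniformly) is not equivalent to (fₘ → f in τ). -/
open Set Filter MeasureTheory Topology

lemma image_eval_pi {n : ℕ} (I : Fin n → Set ℝ) (h : ∀ j, (I j).Nonempty) (k : Fin n) :
    (fun x : Fin n → ℝ => x k) '' Set.univ.pi I = I k := by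
  ext y
  constructor
  · rintro ⟨x, hx, rfl⟩
    exact hx k (Set.mem_univ k)
  · intro hy
    choose z hz using h
    refine ⟨Function.update z k y, ?_, ?_⟩
    · intro j _
      rcases eq_or_ne j k with rfl | hj
      · simpa using hy
      · simpa [Function.update_of_ne hj] using hz j
    · simp

lemma isBrick_singleton {n : ℕ} (y : Fin n → ℝ) : IsBrick {y} := by
  refine ⟨fun j => {y j}, fun j => ⟨Set.ordConnected_singleton, Bornology.isBounded_singleton⟩, ?_⟩
  ext x
  simp [Set.mem_univ_pi, funext_iff, eq_comm]

lemma brickVol_singleton {n : ℕ} (hn : 1 ≤ n) (y : Fin n → ℝ) : brickVol {y} = 0 := by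
  apply Finset.prod_eq_zero (Finset.mem_univ (⟨0, hn⟩ : Fin n))
  simp

/-- There is no topology on the set of K-integrable functions on a (nondegenerate) brick
`T` whose convergent sequences are exactly the nearly uniformly convergent sequences. -/
theorem nearlyUniform_convergence_not_topological {n : ℕ} (hn : 1 ≤ n)
    (T : Set (Fin n → ℝ)) (hT : IsBrick T) (hint : (interior T).Nonempty) :
    ∀ τ : TopologicalSpace {f : (Fin n → ℝ) → ℝ // KIntegrable T f},
      ∃ (F : ℕ → {f : (Fin n → ℝ) → ℝ // KIntegrable T f})
        (f : {f : (Fin n → ℝ) → ℝ // KIntegrable T f}),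
        ¬ (NearlyUniformlyTo T (fun m => (F m).1) f.1 ↔
            Filter.Tendsto F Filter.atTop (@nhds _ τ f)) := by
  intro τ
  letI := τ
  obtain ⟨q, hq⟩ := hint
  obtain ⟨ε, hε, hballT⟩ := Metric.mem_nhds_iff.1 (mem_interior_iff_mem_nhds.1 hq)
  set i0 : Fin n := ⟨0, hn⟩ with hi0
  set xk : ℕ → (Fin n → ℝ) := fun k => Function.update q i0 (q i0 + ε / (k + 2)) with hxk
  have hpos : ∀ k : ℕ, (0 : ℝ) < (k : ℝ) + 2 := by intro k; positivity
  have hfrac_pos : ∀ k : ℕ, (0 : ℝ) < ε / (k + 2) := fun k => div_pos hε (hpos k)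
  have hfrac_le : ∀ k : ℕ, ε / (k + 2) ≤ ε / 2 := by
    intro k
    apply div_le_div_of_nonneg_left hε.le (by norm_num)
    have : (0:ℝ) ≤ (k:ℝ) := Nat.cast_nonneg k
    linarith
  have hmem : ∀ k, xk k ∈ Metric.ball q ε := by
    intro k
    rw [Metric.mem_ball, dist_pi_lt_iff hε]
    intro j
    rcases eq_or_ne j i0 with rfl | hj
    · simp only [hxk, Function.update_self, Real.dist_eq]
      rw [add_sub_cancel_left, abs_of_pos (hfrac_pos k)]
      calc ε / (k + 2) ≤ ε / 2 := hfrac_le k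
        _ < ε := by linarith
    · simp [hxk, Function.update_of_ne hj, hε]
  have hmemT : ∀ k, xk k ∈ T := fun k => hballT (hmem k)
  have hinj : Function.Injective xk := by
    intro a b hab
    have h1 : ε / ((a : ℝ) + 2) = ε / ((b : ℝ) + 2) := by
      have := congrFun hab i0
      simp only [hxk, Function.update_self] at this
      linarith
    rw [div_eq_div_iff (ne_of_gt (hpos a)) (ne_of_gt (hpos b))] at h1
    have h2 : ((a : ℝ) + 2) = ((b : ℝ) + 2) := by
      have := mul_left_cancel₀ (ne_of_gt hε) h1
      linarith
    have : (a : ℝ) = b := by linarith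
    exact_mod_cast this
  set f : (Fin n → ℝ) → ℝ := Function.extend xk (fun k => (k : ℝ)) (fun _ => 0) with hf
  have hfxk : ∀ k, f (xk k) = k := fun k => hinj.extend_apply _ _ k
  have hfzero : ∀ x, (¬ ∃ k, xk k = x) → f x = 0 := by
    intro x hx
    exact Function.extend_apply' _ _ _ hx
  -- the zero step functions
  set g : ℕ → StepRepr T :=
    fun _ => ⟨0, Fin.elim0, Fin.elim0, fun j => j.elim0, fun j => j.elim0⟩ with hg
  have hfn : ∀ m x, (g m).fn x = 0 := by
    intro m x
    simp [StepRepr.fn, hg]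
  -- f is K-integrable
  have hKf : KIntegrable T f := by
    refine ⟨g, ⟨0, fun m x _ => by simp only [hfn m x]; simp⟩, ?_⟩
    intro δ hδ
    set η : ℝ := min (δ / 2) (ε / 2) with hη
    have hηpos : 0 < η := lt_min (by linarith) (by linarith)
    set K : ℕ := ⌈ε / η⌉₊ with hK
    have hKle : ε / ((K : ℝ) + 2) ≤ η := by
      rw [div_le_iff₀ (hpos K)]
      have h1 : ε / η ≤ (K : ℝ) := Nat.le_ceil _
      have h2 : ε = η * (ε / η) := by field_simp
      calc ε = η * (ε / η) := h2
        _ ≤ η * ((K : ℝ) + 2) := by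
            apply mul_le_mul_of_nonneg_left _ hηpos.le
            linarith
    set S : Set (Fin n → ℝ) :=
      Set.univ.pi (fun j => if j = i0 then Set.Icc (q i0) (q i0 + η) else {q j}) with hS
    have hSnonempty : ∀ j, (if j = i0 then Set.Icc (q i0) (q i0 + η) else {q j}).Nonempty := by
      intro j
      split_ifs
      · exact Set.nonempty_Icc.2 (by linarith)
      · exact Set.singleton_nonempty _
    have hSbrick : IsBrick S := by
      refine ⟨_, fun j => ?_, rfl⟩
      split_ifs
      · exact ⟨Set.ordConnected_Icc, Metric.isBounded_Icc _ _⟩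
      · exact ⟨Set.ordConnected_singleton, Bornology.isBounded_singleton⟩
    have hSsub : S ⊆ T := by
      intro x hx
      apply hballT
      rw [Metric.mem_ball, dist_pi_lt_iff hε]
      intro j
      have hxj : x j ∈ (if j = i0 then Set.Icc (q i0) (q i0 + η) else {q j}) :=
        hx j (Set.mem_univ j)
      have hηε : η ≤ ε / 2 := min_le_right _ _
      rcases eq_or_ne j i0 with rfl | hj
      · rw [if_pos rfl] at hxj
        rw [Real.dist_eq, abs_sub_lt_iff]
        constructor
        · linarith [hxj.1, hxj.2]
        · linarith [hxj.1]
      · rw [if_neg hj] at hxj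
        simp only [Set.mem_singleton_iff] at hxj
        simp [hxj, hε]
    have hSvol : brickVol S ≤ η := by
      have hterm : ∀ j, sSup ((fun x : Fin n → ℝ => x j) '' S)
          - sInf ((fun x : Fin n → ℝ => x j) '' S) = if j = i0 then η else 0 := by
        intro j
        rw [hS, image_eval_pi _ hSnonempty j]
        split_ifs
        · rw [csSup_Icc (by linarith), csInf_Icc (by linarith)]
          ring
        · rw [csSup_singleton, csInf_singleton]
          ring
      unfold brickVol
      calc (∏ j, (sSup ((fun x : Fin n → ℝ => x j) '' S)
              - sInf ((fun x : Fin n → ℝ => x j) '' S)))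
          = ∏ j, (if j = i0 then η else 0) := Finset.prod_congr rfl (fun j _ => hterm j)
        _ = (if i0 = i0 then η else 0)
            * ∏ j ∈ Finset.univ.erase i0, (if j = i0 then η else 0) :=
            (Finset.mul_prod_erase _ _ (Finset.mem_univ i0)).symm
        _ ≤ η * 1 := by
            rw [if_pos rfl]
            apply mul_le_mul_of_nonneg_left _ hηpos.le
            apply Finset.prod_le_one
            · intro j hj
              rw [if_neg (Finset.ne_of_mem_erase hj)]
            · intro j hj
              rw [if_neg (Finset.ne_of_mem_erase hj)]
              norm_num
        _ = η := mul_one η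
    have hxkS : ∀ k, K ≤ k → xk k ∈ S := by
      intro k hk
      rw [hS]
      intro j _
      rcases eq_or_ne j i0 with rfl | hj
      · simp only [if_pos rfl]
        simp only [hxk, Function.update_self]
        refine ⟨by linarith [hfrac_pos k], ?_⟩
        have h1 : ε / ((k : ℝ) + 2) ≤ ε / ((K : ℝ) + 2) := by
          apply div_le_div_of_nonneg_left hε.le (hpos K)
          have : (K : ℝ) ≤ (k : ℝ) := Nat.cast_le.2 hk
          linarith
        linarith [hKle]
      · simp only [if_neg hj]
        simp [hxk, Function.update_of_ne hj]
    -- the bricks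
    refine ⟨K + 1, fun j => if (j : ℕ) < K then {xk j} else S, ?_, ?_, ?_⟩
    · intro j
      rcases lt_or_ge (j : ℕ) K with hj | hj
      · simp only [if_pos hj]
        exact ⟨isBrick_singleton _, Set.singleton_subset_iff.2 (hmemT j)⟩
      · simp only [if_neg (not_lt.2 hj)]
        exact ⟨hSbrick, hSsub⟩
    · have hsum : (∑ j : Fin (K + 1),
          brickVol (if (j : ℕ) < K then {xk (j : ℕ)} else S)) = brickVol S := by
        rw [Finset.sum_eq_single_of_mem (Fin.last K) (Finset.mem_univ _)]
        · simp
        · intro j _ hjne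
          have hj : (j : ℕ) < K := by
            rcases lt_or_eq_of_le (Nat.lt_succ_iff.1 j.isLt) with h | h
            · exact h
            · exact absurd (Fin.ext h) hjne
          rw [if_pos hj]
          exact brickVol_singleton hn _
      rw [hsum]
      have : η ≤ δ / 2 := min_le_left _ _
      linarith
    · -- uniform convergence on complement
      have hfz : ∀ x ∈ T \ ⋃ j : Fin (K + 1),
          (if (j : ℕ) < K then ({xk (j : ℕ)} : Set (Fin n → ℝ)) else S), f x = 0 := by
        rintro x ⟨-, hx⟩
        by_contra hne
        have hex : ∃ k, xk k = x := by
          by_contra h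
          exact hne (hfzero x h)
        obtain ⟨k, rfl⟩ := hex
        apply hx
        rcases lt_or_ge k K with hk | hk
        · refine Set.mem_iUnion.2 ⟨⟨k, Nat.lt_succ_of_lt hk⟩, ?_⟩
          simp only [if_pos (show ((⟨k, Nat.lt_succ_of_lt hk⟩ : Fin (K+1)) : ℕ) < K from hk)]
          exact rfl
        · refine Set.mem_iUnion.2 ⟨Fin.last K, ?_⟩
          simp only [Fin.val_last, lt_self_iff_false, if_false]
          exact hxkS k hk
      rw [Metric.tendstoUniformlyOn_iff]
      intro ε' hε'
      apply Filter.Eventually.of_forall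
      intro m x hx
      rw [hfz x hx, hfn m x]
      simpa using hε'
  -- the counterexample
  have hnotNU : ¬ NearlyUniformlyTo T (fun _ : ℕ => f) f := by
    rintro ⟨⟨C, hC⟩, -⟩
    obtain ⟨k, hk⟩ := exists_nat_gt C
    have h1 : |f (xk k)| ≤ C := hC 0 (xk k) (hmemT k)
    rw [hfxk k, abs_of_nonneg (Nat.cast_nonneg k)] at h1
    linarith
  exact ⟨fun _ => ⟨f, hKf⟩, ⟨f, hKf⟩, fun h => hnotNU (h.mpr tendsto_const_nhds)⟩
end

section
/- Let T = [a₁,b₁] × ⋯ × [aₙ,bₙ] be a closed brick. A function f : T → ℝ is K-integrable if and only if (1) f is bounded outside some Jordan null set, and (2) the set dis₂(f) of its discontinuity points of the second kind is a Jordan null set. -/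
open Set Filter MeasureTheory Topology

/-- The set `T_{x,α}` associated to a point `x` of the closed brick `[a, b]` and a
direction `α ∈ {-1,0,1}ⁿ`: the product of the intervals `[aₖ, xₖ)`, `{xₖ}`, `(xₖ, bₖ]`
according to the sign `αₖ`. -/
def dirSet {n : ℕ} (a b x : Fin n → ℝ) (α : Fin n → SignType) : Set (Fin n → ℝ) :=
  {y | ∀ k, y k ∈ (match α k with
    | SignType.neg => Set.Ico (a k) (x k)
    | SignType.zero => ({x k} : Set ℝ)
    | SignType.pos => Set.Ioc (x k) (b k))}

/-- `f` has limit `L` at `x` in the direction `α`: the restriction of `f` to `T_{x,α}`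
tends to `L` at `x`. -/
def HasDirLimit {n : ℕ} (a b : Fin n → ℝ) (f : (Fin n → ℝ) → ℝ) (x : Fin n → ℝ)
    (α : Fin n → SignType) (L : ℝ) : Prop :=
  Filter.Tendsto f (nhdsWithin x (dirSet a b x α)) (nhds L)

/-- The set of discontinuity points of the second kind of `f` on the closed brick
`[a, b]`: interior points where `f` is discontinuous and fails to have a finite limit in
some nonzero direction `α ∈ {-1,0,1}ⁿ`. -/
def dis2 {n : ℕ} (a b : Fin n → ℝ) (f : (Fin n → ℝ) → ℝ) : Set (Fin n → ℝ) :=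
  {x | x ∈ interior (Set.Icc a b) ∧ ¬ ContinuousWithinAt f (Set.Icc a b) x ∧
    ¬ ∀ α : Fin n → SignType, (∃ k, α k ≠ SignType.zero) →
        ∃ L : ℝ, HasDirLimit a b f x α L}

namespace KAux

variable {n : ℕ}

lemma slen_nonneg {s : Set ℝ} (hb : Bornology.IsBounded s) : 0 ≤ sSup s - sInf s := by
  rcases s.eq_empty_or_nonempty with h | h
  · simp [h, Real.sSup_empty, Real.sInf_empty]
  · linarith [Real.sInf_le_sSup s hb.bddBelow hb.bddAbove]

lemma img_subset {S : Set (Fin n → ℝ)} {I : Fin n → Set ℝ} (hS : S = Set.univ.pi I) (k : Fin n) :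
    (fun x => x k) '' S ⊆ I k := by
  rintro t ⟨y, hy, rfl⟩
  rw [hS] at hy
  exact hy k (mem_univ k)

lemma img_bounded {S : Set (Fin n → ℝ)} (h : IsBrick S) (k : Fin n) :
    Bornology.IsBounded ((fun x => x k) '' S) := by
  obtain ⟨I, hI, rfl⟩ := h
  exact (hI k).2.subset (img_subset rfl k)

lemma brickVol_nonneg {S : Set (Fin n → ℝ)} (h : IsBrick S) : 0 ≤ brickVol S :=
  Finset.prod_nonneg fun k _ => slen_nonneg (img_bounded h k)

lemma slen_mono {s t : Set ℝ} (hst : s ⊆ t) (ht : Bornology.IsBounded t) :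
    sSup s - sInf s ≤ sSup t - sInf t := by
  rcases s.eq_empty_or_nonempty with h | h
  · simp only [h, Real.sSup_empty, Real.sInf_empty, sub_zero, sub_self]
    exact slen_nonneg ht
  · have h1 : sSup s ≤ sSup t := csSup_le_csSup ht.bddAbove h hst
    have h2 : sInf t ≤ sInf s := csInf_le_csInf ht.bddBelow h hst
    linarith

lemma brickVol_mono {S S' : Set (Fin n → ℝ)} (h' : IsBrick S') (hss : S ⊆ S') :
    brickVol S ≤ brickVol S' := by
  apply Finset.prod_le_prod
  · intro k _
    apply slen_nonneg
    exact (img_bounded h' k).subset (image_mono hss)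
  · intro k _
    exact slen_mono (image_mono hss) (img_bounded h' k)

lemma isBrick_Icc (a b : Fin n → ℝ) : IsBrick (Set.Icc a b) :=
  ⟨fun k => Set.Icc (a k) (b k), fun k => ⟨ordConnected_Icc, Metric.isBounded_Icc _ _⟩,
    (Set.pi_univ_Icc a b).symm⟩

lemma brick_inter {S S' : Set (Fin n → ℝ)} (h : IsBrick S) (h' : IsBrick S') :
    IsBrick (S ∩ S') := by
  obtain ⟨I, hI, rfl⟩ := h
  obtain ⟨I', hI', rfl⟩ := h'
  refine ⟨fun k => I k ∩ I' k, fun k => ⟨(hI k).1.inter (hI' k).1, ((hI k).2.subset inter_subset_left)⟩, ?_⟩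
  rw [← Set.pi_inter_distrib]

lemma brickVol_pi_Ioo {c d : Fin n → ℝ} (h : ∀ k, c k < d k) :
    brickVol (Set.univ.pi fun k => Set.Ioo (c k) (d k)) = ∏ k, (d k - c k) := by
  have hne : (Set.univ.pi fun k => Set.Ioo (c k) (d k)).Nonempty := by
    refine ⟨fun k => (c k + d k) / 2, fun k _ => ?_⟩
    constructor <;> [skip; skip] <;> nlinarith [h k]
  unfold brickVol
  apply Finset.prod_congr rfl
  intro k _
  rw [Set.eval_image_univ_pi hne, csSup_Ioo (h k), csInf_Ioo (h k)]

lemma exists_open_superbrick {S : Set (Fin n → ℝ)} (h : IsBrick S) {η : ℝ} (hη : 0 < η) :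
    ∃ O : Set (Fin n → ℝ), IsBrick O ∧ IsOpen O ∧ closure S ⊆ O ∧
      brickVol O < brickVol S + η := by
  set len : Fin n → ℝ := fun k => sSup ((fun x => x k) '' S) - sInf ((fun x => x k) '' S) with hlen
  have hlen0 : ∀ k, 0 ≤ len k := fun k => slen_nonneg (img_bounded h k)
  have hcont : ContinuousAt (fun t : ℝ => ∏ k : Fin n, (len k + 2 * t)) 0 := by
    apply Continuous.continuousAt
    exact continuous_finset_prod _ fun k _ => by continuity
  have h0 : (fun t : ℝ => ∏ k : Fin n, (len k + 2 * t)) 0 = brickVol S := by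
    simp [brickVol, hlen]
  have hev : ∀ᶠ t in nhdsWithin (0:ℝ) (Set.Ioi 0),
      (∏ k : Fin n, (len k + 2 * t)) < brickVol S + η := by
    apply Filter.Eventually.filter_mono nhdsWithin_le_nhds
    have := hcont.eventually_lt_const (by rw [h0]; linarith : (fun t : ℝ => ∏ k : Fin n, (len k + 2 * t)) 0 < brickVol S + η)
    exact this
  obtain ⟨t, ht1, ht2⟩ := (hev.and self_mem_nhdsWithin).exists
  set c : Fin n → ℝ := fun k => sInf ((fun x => x k) '' S) - t with hc
  set d : Fin n → ℝ := fun k => sSup ((fun x => x k) '' S) + t with hd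
  have hcd : ∀ k, c k < d k := by
    intro k
    have := hlen0 k
    simp only [hc, hd]
    simp only [hlen] at this
    linarith
  refine ⟨Set.univ.pi fun k => Set.Ioo (c k) (d k), ?_, ?_, ?_, ?_⟩
  · exact ⟨_, fun k => ⟨ordConnected_Ioo, Metric.isBounded_Ioo _ _⟩, rfl⟩
  · exact isOpen_set_pi Set.finite_univ fun k _ => isOpen_Ioo
  · have hsub : S ⊆ Set.univ.pi fun k => Set.Icc (sInf ((fun x => x k) '' S)) (sSup ((fun x => x k) '' S)) := by
      intro y hy k _
      have hmem : y k ∈ (fun x => x k) '' S := ⟨y, hy, rfl⟩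
      exact ⟨csInf_le (img_bounded h k).bddBelow hmem, le_csSup (img_bounded h k).bddAbove hmem⟩
    have hcl : closure S ⊆ Set.univ.pi fun k => Set.Icc (sInf ((fun x => x k) '' S)) (sSup ((fun x => x k) '' S)) :=
      closure_minimal hsub (isClosed_set_pi fun k _ => isClosed_Icc)
    refine hcl.trans ?_
    intro y hy k _
    have := hy k (Set.mem_univ k)
    exact ⟨by simp only [hc]; linarith [this.1], by simp only [hd]; linarith [this.2]⟩
  · rw [brickVol_pi_Ioo hcd]
    have : ∀ k, d k - c k = len k + 2 * t := by intro k; simp [hc, hd, hlen]; ring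
    calc ∏ k, (d k - c k) = ∏ k : Fin n, (len k + 2 * t) := Finset.prod_congr rfl fun k _ => this k
    _ < brickVol S + η := ht1

/-- Conversion from an arbitrary finite family of bricks to a `Fin M`-indexed one. -/
lemma exists_fin_family {ι : Type} [Fintype ι] (B : ι → Set (Fin n → ℝ)) :
    ∃ (M : ℕ) (B' : Fin M → Set (Fin n → ℝ)),
      (∀ j, ∃ i, B' j = B i) ∧ (⋃ j, B' j) = (⋃ i, B i) ∧
      (∑ j, brickVol (B' j)) = ∑ i, brickVol (B i) := by
  classical
  refine ⟨Fintype.card ι, B ∘ (Fintype.equivFin ι).symm, fun j => ⟨_, rfl⟩, ?_, ?_⟩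
  · exact (Fintype.equivFin ι).symm.iSup_comp (g := fun i => B i)
  · exact Fintype.sum_equiv (Fintype.equivFin ι).symm _ _ fun j => rfl

lemma JordanNull.union {A A' : Set (Fin n → ℝ)} (h : JordanNull A) (h' : JordanNull A') :
    JordanNull (A ∪ A') := by
  intro ε hε
  obtain ⟨M1, B1, hB1, hc1, hs1⟩ := h (ε/2) (by linarith)
  obtain ⟨M2, B2, hB2, hc2, hs2⟩ := h' (ε/2) (by linarith)
  obtain ⟨M, B, hBmem, hU, hS⟩ := exists_fin_family (Sum.elim B1 B2)
  refine ⟨M, B, ?_, ?_, ?_⟩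
  · intro j; obtain ⟨i, hi⟩ := hBmem j; rw [hi]; cases i with
    | inl i => exact hB1 i
    | inr i => exact hB2 i
  · rw [hU]
    intro x hx
    rw [Set.mem_iUnion]
    cases hx with
    | inl hx => obtain ⟨j, hj⟩ := Set.mem_iUnion.1 (hc1 hx); exact ⟨Sum.inl j, hj⟩
    | inr hx => obtain ⟨j, hj⟩ := Set.mem_iUnion.1 (hc2 hx); exact ⟨Sum.inr j, hj⟩
  · rw [hS, Fintype.sum_sum_type]
    simpa using by linarith

/-- `g` is a step function on `T`. -/
def IsStep (T : Set (Fin n → ℝ)) (g : (Fin n → ℝ) → ℝ) : Prop :=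
  ∃ r : StepRepr T, r.fn = g

lemma isStep_finsum {T : Set (Fin n → ℝ)} {ι : Type} [Fintype ι] (c : ι → ℝ)
    (B : ι → Set (Fin n → ℝ)) (hB : ∀ i, IsBrick (B i) ∧ B i ⊆ T) :
    IsStep T (fun x => ∑ i, c i * (B i).indicator (fun _ => (1:ℝ)) x) := by
  classical
  refine ⟨⟨Fintype.card ι, c ∘ (Fintype.equivFin ι).symm, B ∘ (Fintype.equivFin ι).symm,
    fun j => (hB _).1, fun j => (hB _).2⟩, ?_⟩
  funext x
  exact Fintype.sum_equiv (Fintype.equivFin ι).symm _ _ fun j => rfl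

lemma isStep_zero {T : Set (Fin n → ℝ)} : IsStep T (fun _ => 0) := by
  have := isStep_finsum (T := T) (ι := Fin 0) (fun i => (0:ℝ)) (fun i => ∅)
    (fun i => i.elim0)
  simpa using this

lemma isStep_const_indicator {T B : Set (Fin n → ℝ)} (hB : IsBrick B) (hsub : B ⊆ T) (c : ℝ) :
    IsStep T (fun x => c * B.indicator (fun _ => (1:ℝ)) x) := by
  have := isStep_finsum (T := T) (ι := Unit) (fun _ => c) (fun _ => B) (fun _ => ⟨hB, hsub⟩)
  simpa using this

lemma IsStep.add' {T : Set (Fin n → ℝ)} {g₁ g₂ : (Fin n → ℝ) → ℝ} (h₁ : IsStep T g₁)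
    (h₂ : IsStep T g₂) : IsStep T (fun x => g₁ x + g₂ x) := by
  obtain ⟨r₁, rfl⟩ := h₁
  obtain ⟨r₂, rfl⟩ := h₂
  have := isStep_finsum (T := T) (ι := Fin r₁.M ⊕ Fin r₂.M) (Sum.elim r₁.c r₂.c)
    (Sum.elim r₁.B r₂.B)
    (by rintro (i | i)
        · exact ⟨r₁.isBrick _, r₁.subset _⟩
        · exact ⟨r₂.isBrick _, r₂.subset _⟩)
  convert this using 2 with x
  rw [StepRepr.fn, StepRepr.fn, Fintype.sum_sum_type]
  simp

lemma IsStep.smul' {T : Set (Fin n → ℝ)} {g : (Fin n → ℝ) → ℝ} (h : IsStep T g) (c : ℝ) :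
    IsStep T (fun x => c * g x) := by
  obtain ⟨r, rfl⟩ := h
  have := isStep_finsum (T := T) (ι := Fin r.M) (fun j => c * r.c j) r.B
    (fun j => ⟨r.isBrick j, r.subset j⟩)
  convert this using 2 with x
  rw [StepRepr.fn, Finset.mul_sum]
  exact Finset.sum_congr rfl fun j _ => by ring

lemma indicator_inter_mul (A B : Set (Fin n → ℝ)) (x : Fin n → ℝ) :
    (A ∩ B).indicator (fun _ => (1:ℝ)) x
      = A.indicator (fun _ => (1:ℝ)) x * B.indicator (fun _ => (1:ℝ)) x := by
  classical
  by_cases hA : x ∈ A <;> by_cases hB : x ∈ B <;>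
    simp [Set.indicator_apply, Set.mem_inter_iff, hA, hB]

lemma IsStep.mul' {T : Set (Fin n → ℝ)} {g₁ g₂ : (Fin n → ℝ) → ℝ} (h₁ : IsStep T g₁)
    (h₂ : IsStep T g₂) : IsStep T (fun x => g₁ x * g₂ x) := by
  obtain ⟨r₁, rfl⟩ := h₁
  obtain ⟨r₂, rfl⟩ := h₂
  have := isStep_finsum (T := T) (ι := Fin r₁.M × Fin r₂.M)
    (fun p => r₁.c p.1 * r₂.c p.2) (fun p => r₁.B p.1 ∩ r₂.B p.2)
    (fun p => ⟨brick_inter (r₁.isBrick p.1) (r₂.isBrick p.2),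
      (Set.inter_subset_left).trans (r₁.subset p.1)⟩)
  convert this using 2 with x
  rw [StepRepr.fn, StepRepr.fn, Finset.sum_mul_sum]
  rw [← Finset.sum_product']
  apply Finset.sum_congr rfl
  rintro ⟨i, j⟩ _
  rw [indicator_inter_mul]
  ring

lemma IsStep.sub' {T : Set (Fin n → ℝ)} {g₁ g₂ : (Fin n → ℝ) → ℝ} (h₁ : IsStep T g₁)
    (h₂ : IsStep T g₂) : IsStep T (fun x => g₁ x - g₂ x) := by
  have := h₁.add' (h₂.smul' (-1))
  convert this using 2 with x
  ring

lemma exists_pos_le_finite {ι : Type} [Fintype ι] (f : ι → ℝ) (hf : ∀ i, 0 < f i) :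
    ∃ ε > 0, ∀ i, ε ≤ f i := by
  classical
  rcases isEmpty_or_nonempty ι with h | h
  · exact ⟨1, one_pos, fun i => (IsEmpty.false i).elim⟩
  · exact ⟨Finset.univ.inf' Finset.univ_nonempty f,
      (Finset.lt_inf'_iff _).2 fun i _ => hf i,
      fun i => Finset.inf'_le _ (Finset.mem_univ i)⟩

lemma indicator_const_left {I : Set ℝ} (hI : I.OrdConnected) (hb : Bornology.IsBounded I)
    (p : ℝ) : ∃ ε > (0:ℝ), ∃ v : ℝ, ∀ t, p - ε < t → t < p →
      I.indicator (fun _ => (1:ℝ)) t = v := by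
  by_cases h : ∃ t ∈ I, t < p
  · obtain ⟨t0, ht0, ht0p⟩ := h
    rcases le_or_gt p (sSup I) with hsup | hsup
    · refine ⟨p - t0, by linarith, 1, fun t h1 h2 => ?_⟩
      have h1' : t0 < t := by linarith
      obtain ⟨u, hu, htu⟩ := exists_lt_of_lt_csSup ⟨t0, ht0⟩ (lt_of_lt_of_le h2 hsup)
      have : t ∈ I := hI.out ht0 hu ⟨le_of_lt h1', le_of_lt htu⟩
      simp [Set.indicator_apply, this]
    · refine ⟨p - sSup I, by linarith, 0, fun t h1 h2 => ?_⟩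
      have : t ∉ I := fun ht => by
        have := le_csSup hb.bddAbove ht; linarith
      simp [Set.indicator_apply, this]
  · refine ⟨1, one_pos, 0, fun t h1 h2 => ?_⟩
    have : t ∉ I := fun ht => h ⟨t, ht, h2⟩
    simp [Set.indicator_apply, this]

lemma indicator_const_right {I : Set ℝ} (hI : I.OrdConnected) (hb : Bornology.IsBounded I)
    (p : ℝ) : ∃ ε > (0:ℝ), ∃ v : ℝ, ∀ t, p < t → t < p + ε →
      I.indicator (fun _ => (1:ℝ)) t = v := by
  by_cases h : ∃ t ∈ I, p < t
  · obtain ⟨t0, ht0, ht0p⟩ := h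
    rcases le_or_gt (sInf I) p with hinf | hinf
    · refine ⟨t0 - p, by linarith, 1, fun t h1 h2 => ?_⟩
      have h2' : t < t0 := by linarith
      obtain ⟨u, hu, htu⟩ := exists_lt_of_csInf_lt ⟨t0, ht0⟩ (lt_of_le_of_lt hinf h1)
      have : t ∈ I := hI.out hu ht0 ⟨le_of_lt htu, le_of_lt h2'⟩
      simp [Set.indicator_apply, this]
    · refine ⟨sInf I - p, by linarith, 0, fun t h1 h2 => ?_⟩
      have : t ∉ I := fun ht => by
        have := csInf_le hb.bddBelow ht; linarith
      simp [Set.indicator_apply, this]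
  · refine ⟨1, one_pos, 0, fun t h1 h2 => ?_⟩
    have : t ∉ I := fun ht => h ⟨t, ht, h1⟩
    simp [Set.indicator_apply, this]

lemma indicator_dir_const {I : Set ℝ} (hI : I.OrdConnected) (hb : Bornology.IsBounded I)
    (p : ℝ) (s : SignType) : ∃ ε > (0:ℝ), ∃ v : ℝ, ∀ t, |t - p| < ε →
      (match s with
        | SignType.neg => t < p
        | SignType.zero => t = p
        | SignType.pos => p < t) → I.indicator (fun _ => (1:ℝ)) t = v := by
  cases s with
  | neg =>
    obtain ⟨ε, hε, v, hv⟩ := indicator_const_left hI hb p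
    exact ⟨ε, hε, v, fun t h1 h2 => hv t (by rw [abs_sub_lt_iff] at h1; linarith [h1.2]) h2⟩
  | zero =>
    exact ⟨1, one_pos, I.indicator (fun _ => (1:ℝ)) p, fun t _ h2 => by rw [h2]⟩
  | pos =>
    obtain ⟨ε, hε, v, hv⟩ := indicator_const_right hI hb p
    exact ⟨ε, hε, v, fun t h1 h2 => hv t h2 (by rw [abs_sub_lt_iff] at h1; linarith [h1.1])⟩

lemma indicator_pi_eq_prod (I : Fin n → Set ℝ) (y : Fin n → ℝ) :
    (Set.univ.pi I).indicator (fun _ => (1:ℝ)) y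
      = ∏ k, (I k).indicator (fun _ => (1:ℝ)) (y k) := by
  classical
  by_cases h : y ∈ Set.univ.pi I
  · rw [Set.indicator_of_mem h]
    symm
    exact Finset.prod_eq_one fun k _ => by simp [Set.indicator_apply, h k (Set.mem_univ k)]
  · rw [Set.indicator_of_notMem h]
    symm
    obtain ⟨k, hk⟩ : ∃ k, y k ∉ I k := by
      by_contra hc
      push_neg at hc
      exact h fun k _ => hc k
    exact Finset.prod_eq_zero (Finset.mem_univ k) (by simp [Set.indicator_apply, hk])

lemma mem_dirSet_iff {a b x : Fin n → ℝ} {α : Fin n → SignType} {y : Fin n → ℝ} :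
    y ∈ dirSet a b x α ↔ ∀ k, y k ∈ (match α k with
      | SignType.neg => Set.Ico (a k) (x k)
      | SignType.zero => ({x k} : Set ℝ)
      | SignType.pos => Set.Ioc (x k) (b k)) := Iff.rfl

lemma tendsto_indicator_dir {B : Set (Fin n → ℝ)} (hB : IsBrick B) (a b x : Fin n → ℝ)
    (α : Fin n → SignType) :
    ∃ v, Tendsto (fun y => B.indicator (fun _ => (1:ℝ)) y)
      (nhdsWithin x (dirSet a b x α)) (nhds v) := by
  classical
  obtain ⟨I, hI, rfl⟩ := hB
  choose εf hεf vf hvf using fun k => indicator_dir_const (hI k).1 (hI k).2 (x k) (α k)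
  obtain ⟨ε0, hε0, hle⟩ := exists_pos_le_finite εf hεf
  refine ⟨∏ k, vf k, ?_⟩
  have hev : ∀ᶠ y in nhdsWithin x (dirSet a b x α),
      (Set.univ.pi I).indicator (fun _ => (1:ℝ)) y = ∏ k, vf k := by
    filter_upwards [self_mem_nhdsWithin,
      eventually_nhdsWithin_of_eventually_nhds (Metric.ball_mem_nhds x hε0)] with y hy hball
    rw [indicator_pi_eq_prod]
    apply Finset.prod_congr rfl
    intro k _
    have hdk : |y k - x k| < εf k := by
      have h1 : dist (y k) (x k) ≤ dist y x := dist_le_pi_dist y x k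
      have h2 : dist y x < ε0 := hball
      rw [Real.dist_eq] at h1
      linarith [hle k]
    have hyk := hy k
    apply hvf k (y k) hdk
    revert hyk
    cases hαk : α k <;> intro hyk <;> simp_all [Set.mem_Ico, Set.mem_Ioc]
  exact Tendsto.congr' (Filter.EventuallyEq.symm hev) tendsto_const_nhds

lemma steprepr_dir_limit {T : Set (Fin n → ℝ)} (r : StepRepr T) (a b x : Fin n → ℝ)
    (α : Fin n → SignType) :
    ∃ L, Tendsto r.fn (nhdsWithin x (dirSet a b x α)) (nhds L) := by
  choose v hv using fun j => tendsto_indicator_dir (r.isBrick j) a b x α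
  refine ⟨∑ j, r.c j * v j, ?_⟩
  unfold StepRepr.fn
  exact tendsto_finset_sum _ fun j _ => (hv j).const_mul _

lemma interior_Icc_pi (a b : Fin n → ℝ) :
    interior (Set.Icc a b) = Set.univ.pi fun k => Set.Ioo (a k) (b k) := by
  rw [← Set.pi_univ_Icc, interior_pi_set Set.finite_univ]
  simp [interior_Icc]

lemma dirSet_subset_Icc {a b x : Fin n → ℝ} (hx : x ∈ Set.Icc a b) (α : Fin n → SignType) :
    dirSet a b x α ⊆ Set.Icc a b := by
  intro y hy
  rw [Set.mem_Icc]
  constructor <;> rw [Pi.le_def] <;> intro k <;> [skip; skip] <;>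
  · have hyk := hy k
    have h1 := hx.1 k
    have h2 := hx.2 k
    revert hyk
    cases α k <;> intro hyk <;> simp_all [Set.mem_Ico, Set.mem_Ioc] <;> linarith

lemma dir_neBot {a b x : Fin n → ℝ}
    (hx : x ∈ Set.univ.pi fun k => Set.Ioo (a k) (b k)) (α : Fin n → SignType) :
    (nhdsWithin x (dirSet a b x α)).NeBot := by
  rw [mem_closure_iff_nhdsWithin_neBot.symm]
  obtain ⟨ε, hε, hle⟩ := exists_pos_le_finite
    (fun k => min (x k - a k) (b k - x k))
    (fun k => by
      have := hx k (Set.mem_univ k)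
      exact lt_min (by linarith [this.1]) (by linarith [this.2]))
  have hj : ∀ j : ℕ, (0:ℝ) < ε * (1 / (j + 1)) := fun j => by positivity
  have hj1 : ∀ j : ℕ, ε * (1 / ((j:ℝ) + 1)) ≤ ε := fun j => by
    rw [mul_one_div]
    apply div_le_self (le_of_lt hε)
    exact le_add_of_nonneg_left (Nat.cast_nonneg j)
  set y : ℕ → (Fin n → ℝ) := fun j k => x k + (α k : ℝ) * (ε * (1 / (j + 1))) with hy
  refine mem_closure_of_tendsto (f := y) (b := Filter.atTop) ?_ ?_
  · rw [tendsto_pi_nhds]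
    intro k
    have : Tendsto (fun j : ℕ => ε * (1 / ((j:ℝ) + 1))) atTop (nhds 0) := by
      have := tendsto_one_div_add_atTop_nhds_zero_nat (𝕜 := ℝ)
      simpa using this.const_mul ε
    have := tendsto_const_nhds (x := x k) (f := Filter.atTop (α := ℕ)) |>.add
      (this.const_mul ((α k : ℝ)))
    simpa [hy] using this
  · apply Filter.Eventually.of_forall
    intro j k
    have hεk := le_min_iff.mp (hle k)
    have h1 := hj j
    have h2 := hj1 j
    simp only [one_div] at h1 h2
    cases hαk : α k <;>
      simp [hy, hαk, Set.mem_Ico, Set.mem_Ioc, one_div] <;>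
      exact ⟨by linarith [hεk.1, hεk.2], by linarith [hεk.1, hεk.2]⟩

lemma exists_tendsto_of_unif {l : Filter (Fin n → ℝ)} (hl : l.NeBot)
    {F : ℕ → (Fin n → ℝ) → ℝ} {f : (Fin n → ℝ) → ℝ} {S : Set (Fin n → ℝ)}
    (hS : ∀ᶠ y in l, y ∈ S) (hu : TendstoUniformlyOn F f atTop S)
    (hF : ∀ m, ∃ L, Tendsto (F m) l (nhds L)) : ∃ L, Tendsto f l (nhds L) := by
  have hC : Cauchy (Filter.map f l) := by
    rw [Metric.cauchy_iff]
    refine ⟨Filter.map_neBot, fun ε hε => ?_⟩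
    have h4 : (0:ℝ) < ε/4 := by linarith
    obtain ⟨m, hm⟩ := (Metric.tendstoUniformlyOn_iff.1 hu (ε/4) h4).exists
    obtain ⟨L, hL⟩ := hF m
    have hev : ∀ᶠ y in l, dist (F m y) L < ε/4 := (Metric.tendsto_nhds.1 hL) _ h4
    refine ⟨f '' {y | y ∈ S ∧ dist (F m y) L < ε/4},
      Filter.image_mem_map (Filter.eventually_iff.mp (hS.and hev)), ?_⟩
    rintro _ ⟨y1, ⟨hy1S, hy1⟩, rfl⟩ _ ⟨y2, ⟨hy2S, hy2⟩, rfl⟩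
    have d1 := hm y1 hy1S
    have d2 := hm y2 hy2S
    have t1 : dist (f y1) L ≤ dist (f y1) (F m y1) + dist (F m y1) L := dist_triangle _ _ _
    have t2 : dist (f y2) L ≤ dist (f y2) (F m y2) + dist (F m y2) L := dist_triangle _ _ _
    have t3 : dist (f y1) (f y2) ≤ dist (f y1) L + dist (f y2) L := dist_triangle_right _ _ _
    linarith
  obtain ⟨L, hL⟩ := CompleteSpace.complete hC
  exact ⟨L, hL⟩

lemma clamp_dist {C L v : ℝ} (hv : |v| ≤ C) :
    |max (-C) (min C L) - v| ≤ |L - v| := by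
  have hC0 : 0 ≤ C := (abs_nonneg v).trans hv
  have hv' := abs_le.1 hv
  rcases le_total C L with h | h
  · rw [min_eq_left h, max_eq_right (by linarith : -C ≤ C),
      abs_of_nonneg (by linarith : (0:ℝ) ≤ C - v), abs_of_nonneg (by linarith : (0:ℝ) ≤ L - v)]
    linarith
  · rcases le_total L (-C) with h2 | h2
    · rw [min_eq_right h, max_eq_left h2,
        abs_of_nonpos (by linarith : -C - v ≤ 0), abs_of_nonpos (by linarith : L - v ≤ 0)]
      linarith
    · rw [min_eq_right h, max_eq_right h2]

open scoped Classical

/-- A piece of the cube of radius `η` around `x`. -/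
def piece (x : Fin n → ℝ) (η : ℝ) (α : Fin n → SignType) : Set (Fin n → ℝ) :=
  Set.univ.pi fun k => (match α k with
    | SignType.neg => Set.Ico (x k - η) (x k)
    | SignType.zero => ({x k} : Set ℝ)
    | SignType.pos => Set.Ioc (x k) (x k + η))

/-- The sign pattern of `y` relative to `x`. -/
noncomputable def pat (x y : Fin n → ℝ) : Fin n → SignType := fun k =>
  if y k < x k then SignType.neg else if x k < y k then SignType.pos else SignType.zero

noncomputable def hfun (val : (Fin n → ℝ) → (Fin n → SignType) → ℝ)
    (η : (Fin n → ℝ) → ℝ) (x : Fin n → ℝ) : (Fin n → ℝ) → ℝ :=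
  fun y => ∑ α : Fin n → SignType, val x α * (piece x (η x) α).indicator (fun _ => (1:ℝ)) y

noncomputable def greedy (val : (Fin n → ℝ) → (Fin n → SignType) → ℝ)
    (η : (Fin n → ℝ) → ℝ) : List (Fin n → ℝ) → (Fin n → ℝ) → ℝ
  | [] => fun _ => 0
  | x :: rest => fun y => if dist y x ≤ η x then hfun val η x y else greedy val η rest y

lemma isBrick_piece (x : Fin n → ℝ) (η : ℝ) (α : Fin n → SignType) : IsBrick (piece x η α) := by
  refine ⟨_, fun k => ?_, rfl⟩
  cases α k <;>
    simp only [] <;>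
    exact ⟨by first
      | exact Set.ordConnected_Ico
      | exact Set.ordConnected_Ioc
      | exact Set.ordConnected_singleton,
      by first
      | exact Metric.isBounded_Ico _ _
      | exact Metric.isBounded_Ioc _ _
      | exact Bornology.isBounded_singleton⟩

lemma piece_subset_Icc {a b x : Fin n → ℝ} {η : ℝ} (hη : 0 ≤ η)
    (hx : ∀ k, a k ≤ x k - η ∧ x k + η ≤ b k) (α : Fin n → SignType) :
    piece x η α ⊆ Set.Icc a b := by
  intro y hy
  have hk : ∀ k, a k ≤ y k ∧ y k ≤ b k := by
    intro k
    have hyk := hy k (Set.mem_univ k)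
    have h1 := (hx k).1
    have h2 := (hx k).2
    cases hαk : α k <;>
      simp only [hαk, Set.mem_Ico, Set.mem_Ioc, Set.mem_singleton_iff] at hyk
    · exact ⟨by rw [hyk]; linarith, by rw [hyk]; linarith⟩
    · exact ⟨by linarith [hyk.1], by linarith [hyk.2]⟩
    · exact ⟨by linarith [hyk.1], by linarith [hyk.2]⟩
  rw [Set.mem_Icc]
  exact ⟨fun k => (hk k).1, fun k => (hk k).2⟩

lemma dist_coord {x y : Fin n → ℝ} {η : ℝ} (h : dist y x ≤ η) (k : Fin n) :
    |y k - x k| ≤ η := by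
  have := dist_le_pi_dist y x k
  rw [Real.dist_eq] at this
  linarith

lemma mem_piece_pat {x y : Fin n → ℝ} {η : ℝ} (hy : dist y x ≤ η) :
    y ∈ piece x η (pat x y) := by
  intro k _
  have hd := dist_coord hy k
  rw [abs_le] at hd
  rcases lt_trichotomy (y k) (x k) with h | h | h
  · have hp : pat x y k = SignType.neg := by simp [pat, h]
    simp only [hp]
    exact Set.mem_Ico.2 ⟨by linarith [hd.1], h⟩
  · have hp : pat x y k = SignType.zero := by simp [pat, h]
    simp only [hp]
    exact h
  · have hp : pat x y k = SignType.pos := by simp [pat, h, asymm h]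
    simp only [hp]
    exact Set.mem_Ioc.2 ⟨h, by linarith [hd.2]⟩

lemma eq_pat_of_mem_piece {x y : Fin n → ℝ} {η : ℝ} {α : Fin n → SignType}
    (hy : y ∈ piece x η α) : α = pat x y := by
  funext k
  have hyk := hy k (Set.mem_univ k)
  cases hαk : α k <;>
    simp only [hαk, Set.mem_Ico, Set.mem_Ioc, Set.mem_singleton_iff] at hyk
  · simp [pat, hyk]
  · simp [pat, hyk.2]
  · simp [pat, hyk.1, asymm hyk.1]

lemma hfun_eval {val : (Fin n → ℝ) → (Fin n → SignType) → ℝ} {η : (Fin n → ℝ) → ℝ}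
    {x y : Fin n → ℝ} (h : dist y x ≤ η x) :
    hfun val η x y = val x (pat x y) := by
  unfold hfun
  rw [Finset.sum_eq_single (pat x y)]
  · rw [Set.indicator_of_mem (mem_piece_pat h), mul_one]
  · intro α _ hne
    rw [Set.indicator_of_notMem, mul_zero]
    exact fun hmem => hne (eq_pat_of_mem_piece hmem)
  · intro h; exact absurd (Finset.mem_univ _) h

lemma greedy_isStep {a b : Fin n → ℝ} {val : (Fin n → ℝ) → (Fin n → SignType) → ℝ}
    {η : (Fin n → ℝ) → ℝ} {l : List (Fin n → ℝ)}
    (hl : ∀ x ∈ l, 0 ≤ η x ∧ ∀ k, a k ≤ x k - η x ∧ x k + η x ≤ b k) :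
    IsStep (Set.Icc a b) (greedy val η l) := by
  induction l with
  | nil => exact isStep_zero
  | cons x rest ih =>
    have hx := hl x List.mem_cons_self
    have hrest := ih fun z hz => hl z (List.mem_cons_of_mem x hz)
    have hQeq : Metric.closedBall x (η x) = Set.univ.pi fun k => Set.Icc (x k - η x) (x k + η x) := by
      rw [closedBall_pi x hx.1]
      exact congrArg (Set.pi Set.univ) (funext fun k => Real.closedBall_eq_Icc)
    have hQbrick : IsBrick (Metric.closedBall x (η x)) := by
      rw [hQeq]
      exact ⟨_, fun k => ⟨Set.ordConnected_Icc, Metric.isBounded_Icc _ _⟩, rfl⟩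
    have hQsub : Metric.closedBall x (η x) ⊆ Set.Icc a b := by
      rw [hQeq, ← Set.pi_univ_Icc]
      exact Set.pi_mono fun k _ => Set.Icc_subset_Icc (hx.2 k).1 (hx.2 k).2
    have hh : IsStep (Set.Icc a b) (hfun val η x) := by
      have := isStep_finsum (T := Set.Icc a b) (ι := Fin n → SignType)
        (fun α => val x α) (fun α => piece x (η x) α)
        (fun α => ⟨isBrick_piece x (η x) α, piece_subset_Icc hx.1 hx.2 α⟩)
      exact this
    have hQind : IsStep (Set.Icc a b)
        (fun y => (Metric.closedBall x (η x)).indicator (fun _ => (1:ℝ)) y) := by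
      have := isStep_const_indicator hQbrick hQsub 1
      simpa using this
    have heq : greedy val η (x :: rest)
        = fun y => (Metric.closedBall x (η x)).indicator (fun _ => (1:ℝ)) y * hfun val η x y
          + (greedy val η rest y
            - (Metric.closedBall x (η x)).indicator (fun _ => (1:ℝ)) y * greedy val η rest y) := by
      funext y
      by_cases h : dist y x ≤ η x
      · have : y ∈ Metric.closedBall x (η x) := Metric.mem_closedBall.2 h
        simp [greedy, h, Set.indicator_of_mem this]
      · have : y ∉ Metric.closedBall x (η x) := fun hc => h (Metric.mem_closedBall.1 hc)
        simp [greedy, h, Set.indicator_of_notMem this]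
    rw [heq]
    exact (hQind.mul' hh).add' (hrest.sub' (hQind.mul' hrest))

lemma greedy_bound {val : (Fin n → ℝ) → (Fin n → SignType) → ℝ} {η : (Fin n → ℝ) → ℝ}
    {l : List (Fin n → ℝ)} {C : ℝ} (hC : 0 ≤ C) (hval : ∀ x ∈ l, ∀ α, |val x α| ≤ C) :
    ∀ y, |greedy val η l y| ≤ C := by
  induction l with
  | nil => intro y; simpa [greedy] using hC
  | cons x rest ih =>
    intro y
    by_cases h : dist y x ≤ η x
    · rw [show greedy val η (x :: rest) y = hfun val η x y from if_pos h, hfun_eval h]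
      exact hval x List.mem_cons_self _
    · rw [show greedy val η (x :: rest) y = greedy val η rest y from if_neg h]
      exact ih (fun z hz => hval z (List.mem_cons_of_mem x hz)) y

lemma greedy_acc {val : (Fin n → ℝ) → (Fin n → SignType) → ℝ} {η : (Fin n → ℝ) → ℝ}
    {l : List (Fin n → ℝ)} {K : Set (Fin n → ℝ)} {f : (Fin n → ℝ) → ℝ} {ε : ℝ}
    (hval : ∀ x ∈ l, ∀ y ∈ K, dist y x ≤ η x → |f y - val x (pat x y)| ≤ ε) :
    ∀ y ∈ K, (∃ x ∈ l, dist y x < η x) → |greedy val η l y - f y| ≤ ε := by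
  induction l with
  | nil => rintro y _ ⟨x, hx, _⟩; exact absurd hx List.not_mem_nil
  | cons x rest ih =>
    rintro y hyK ⟨x', hx', hdist⟩
    by_cases h : dist y x ≤ η x
    · rw [show greedy val η (x :: rest) y = hfun val η x y from if_pos h, hfun_eval h,
        abs_sub_comm]
      exact hval x List.mem_cons_self y hyK h
    · rw [show greedy val η (x :: rest) y = greedy val η rest y from if_neg h]
      rcases List.mem_cons.1 hx' with rfl | hx'
      · exact absurd (le_of_lt hdist) h
      · exact ih (fun z hz => hval z (List.mem_cons_of_mem x hz)) y hyK ⟨x', hx', hdist⟩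

lemma piece_subset_dirSet {a b x : Fin n → ℝ} {η : ℝ}
    (hx : ∀ k, a k ≤ x k - η ∧ x k + η ≤ b k) (α : Fin n → SignType) :
    piece x η α ⊆ dirSet a b x α := by
  intro y hy k
  have hyk := hy k (Set.mem_univ k)
  cases hαk : α k <;>
    simp only [hαk, Set.mem_Ico, Set.mem_Ioc, Set.mem_singleton_iff] at hyk ⊢
  · exact hyk
  · exact ⟨by linarith [(hx k).1, hyk.1], hyk.2⟩
  · exact ⟨hyk.1, by linarith [(hx k).2, hyk.2]⟩

lemma eq_of_pat_zero {x y : Fin n → ℝ} (h : ∀ k, pat x y k = SignType.zero) : y = x := by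
  funext k
  rcases lt_trichotomy (y k) (x k) with h' | h' | h'
  · exfalso; have := h k; simp [pat, h'] at this
  · exact h'
  · exfalso; have := h k; simp [pat, h', asymm h'] at this

lemma approx {a b : Fin n → ℝ} {f : (Fin n → ℝ) → ℝ} {K : Set (Fin n → ℝ)} {C ε : ℝ}
    (hK : IsCompact K) (hKsub : K ⊆ Set.univ.pi fun k => Set.Ioo (a k) (b k))
    (hC : 0 ≤ C) (hfC : ∀ x ∈ K, |f x| ≤ C)
    (hlim : ∀ x ∈ K, ∀ α : Fin n → SignType, (∃ k, α k ≠ SignType.zero) →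
      ∃ L, Tendsto f (nhdsWithin x (dirSet a b x α)) (nhds L))
    (hε : 0 < ε) :
    ∃ g, IsStep (Set.Icc a b) g ∧ (∀ y, |g y| ≤ C) ∧ ∀ y ∈ K, |g y - f y| ≤ ε := by
  classical
  have key : ∀ x : Fin n → ℝ, ∃ (η : ℝ) (val : (Fin n → SignType) → ℝ), 0 < η ∧
      (x ∈ K → ((∀ k, a k ≤ x k - η ∧ x k + η ≤ b k) ∧ (∀ α, |val α| ≤ C) ∧
        (∀ y ∈ K, dist y x ≤ η → |f y - val (pat x y)| ≤ ε))) := by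
    intro x
    by_cases hx : x ∈ K
    · have hlim2 : ∀ α : Fin n → SignType, ∃ L : ℝ, (∃ k, α k ≠ SignType.zero) →
          Tendsto f (nhdsWithin x (dirSet a b x α)) (nhds L) := by
        intro α
        by_cases h : ∃ k, α k ≠ SignType.zero
        · exact (hlim x hx α h).imp fun L hL => fun _ => hL
        · exact ⟨0, fun h' => absurd h' h⟩
      choose L hL using hlim2
      have hδ : ∀ α : Fin n → SignType, ∃ δ > (0:ℝ), (∃ k, α k ≠ SignType.zero) →
          ∀ y ∈ dirSet a b x α, dist y x < δ → |f y - L α| < ε/2 := by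
        intro α
        by_cases h : ∃ k, α k ≠ SignType.zero
        · obtain ⟨δ, hδ0, hδm⟩ := (Metric.tendsto_nhdsWithin_nhds.1 (hL α h)) (ε/2) (by linarith)
          refine ⟨δ, hδ0, fun _ y hy hd => ?_⟩
          rw [← Real.dist_eq]
          exact hδm hy hd
        · exact ⟨1, one_pos, fun h' => absurd h' h⟩
      choose δ hδ0 hδmain using hδ
      obtain ⟨δ0, hδ0pos, hδ0le⟩ := exists_pos_le_finite δ hδ0
      obtain ⟨η1, hη1pos, hη1le⟩ := exists_pos_le_finite
        (fun k => min (x k - a k) (b k - x k))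
        (fun k => by
          have := hKsub hx k (Set.mem_univ k)
          exact lt_min (by linarith [this.1]) (by linarith [this.2]))
      set η : ℝ := min η1 (δ0/2) with hηdef
      have hηpos : 0 < η := lt_min hη1pos (by linarith)
      refine ⟨η, fun α => if h : ∃ k, α k ≠ SignType.zero
        then max (-C) (min C (L α)) else f x, hηpos, fun _ => ⟨?_, ?_, ?_⟩⟩
      · intro k
        have h1 := le_min_iff.1 (hη1le k)
        have h2 : η ≤ η1 := min_le_left _ _
        exact ⟨by linarith [h1.1], by linarith [h1.2]⟩
      · intro α
        dsimp only
        split_ifs with h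
        · rw [abs_le]
          constructor
          · exact le_max_left _ _
          · exact max_le (by linarith) ((min_le_left _ _))
        · exact hfC x hx
      · intro y hyK hdist
        by_cases hβ : ∃ k, pat x y k ≠ SignType.zero
        · have hcube : ∀ k, a k ≤ x k - η ∧ x k + η ≤ b k := by
            intro k
            have h1 := le_min_iff.1 (hη1le k)
            have h2 : η ≤ η1 := min_le_left _ _
            exact ⟨by linarith [h1.1], by linarith [h1.2]⟩
          have hydir : y ∈ dirSet a b x (pat x y) :=
            piece_subset_dirSet hcube _ (mem_piece_pat hdist)
          have hdlt : dist y x < δ (pat x y) := by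
            have h2 : η ≤ δ0/2 := min_le_right _ _
            have h3 := hδ0le (pat x y)
            linarith
          have hmain := hδmain (pat x y) hβ y hydir hdlt
          have hclamp := clamp_dist (C := C) (L := L (pat x y)) (hfC y hyK)
          dsimp only
          rw [dif_pos hβ]
          rw [abs_sub_comm]
          calc |max (-C) (min C (L (pat x y))) - f y| ≤ |L (pat x y) - f y| := hclamp
            _ = |f y - L (pat x y)| := abs_sub_comm _ _
            _ ≤ ε := by linarith
        · push_neg at hβ
          have hyx : y = x := eq_of_pat_zero fun k => hβ k
          dsimp only
          rw [dif_neg (by rintro ⟨k, hk⟩; exact hk (hβ k)), hyx, sub_self, abs_zero]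
          linarith
    · exact ⟨1, fun _ => 0, one_pos, fun h => absurd h hx⟩
  choose η val hηpos hmain using key
  obtain ⟨t, htK, htcov⟩ := hK.elim_nhds_subcover (fun x => Metric.ball x (η x))
    (fun x _ => Metric.ball_mem_nhds x (hηpos x))
  refine ⟨greedy val η t.toList, ?_, ?_, ?_⟩
  · apply greedy_isStep (a := a) (b := b)
    intro x hx
    have hx' := htK x (Finset.mem_toList.1 hx)
    exact ⟨le_of_lt (hηpos x), (hmain x hx').1⟩
  · exact greedy_bound hC fun x hx α => (hmain x (htK x (Finset.mem_toList.1 hx))).2.1 α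
  · intro y hy
    apply greedy_acc (fun x hx => (hmain x (htK x (Finset.mem_toList.1 hx))).2.2) y hy
    obtain ⟨x, hx, hball⟩ := Set.mem_iUnion₂.1 (htcov hy)
    exact ⟨x, Finset.mem_toList.2 hx, Metric.mem_ball.1 hball⟩

lemma slen_zero {s : Set ℝ} {c : ℝ} (h : s ⊆ {c}) : sSup s - sInf s = 0 := by
  rcases Set.subset_singleton_iff_eq.1 h with rfl | rfl
  · simp [Real.sSup_empty, Real.sInf_empty]
  · simp [csSup_singleton, csInf_singleton]

lemma jordanNull_boundary (a b : Fin n → ℝ) :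
    JordanNull (Set.Icc a b \ Set.univ.pi fun k => Set.Ioo (a k) (b k)) := by
  classical
  intro ε hε
  set B : Fin n × Bool → Set (Fin n → ℝ) := fun p =>
    Set.univ.pi fun j => if j = p.1
      then ({(if p.2 then a p.1 else b p.1)} : Set ℝ) else Set.Icc (a j) (b j) with hBdef
  obtain ⟨M, B', hmem, hU, hS⟩ := exists_fin_family B
  refine ⟨M, B', ?_, ?_, ?_⟩
  · intro j
    obtain ⟨i, hi⟩ := hmem j
    rw [hi, hBdef]
    refine ⟨_, fun k => ?_, rfl⟩
    split_ifs <;>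
      first
        | exact ⟨Set.ordConnected_singleton, Bornology.isBounded_singleton⟩
        | exact ⟨Set.ordConnected_Icc, Metric.isBounded_Icc _ _⟩
  · rw [hU]
    rintro x ⟨hxI, hxP⟩
    have hxm := Set.mem_Icc.1 hxI
    obtain ⟨k, hk⟩ : ∃ k, x k ∉ Set.Ioo (a k) (b k) := by
      by_contra hc
      push_neg at hc
      exact hxP fun k _ => hc k
    rw [Set.mem_Ioo, not_and_or] at hk
    rcases hk with hk | hk
    · have hxa : x k = a k := le_antisymm (not_lt.1 hk) (hxm.1 k)
      apply Set.mem_iUnion.2 ⟨(k, true), ?_⟩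
      intro j _
      dsimp only
      by_cases hj : j = k
      · subst hj; simp [hxa]
      · rw [if_neg hj]; exact ⟨hxm.1 j, hxm.2 j⟩
    · have hxb : x k = b k := le_antisymm (hxm.2 k) (not_lt.1 hk)
      apply Set.mem_iUnion.2 ⟨(k, false), ?_⟩
      intro j _
      dsimp only
      by_cases hj : j = k
      · subst hj; simp [hxb]
      · rw [if_neg hj]; exact ⟨hxm.1 j, hxm.2 j⟩
  · rw [hS]
    have hz : ∀ p : Fin n × Bool, brickVol (B p) = 0 := by
      intro p
      apply Finset.prod_eq_zero (Finset.mem_univ p.1)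
      apply slen_zero (c := if p.2 then a p.1 else b p.1)
      have := img_subset (rfl : B p = Set.univ.pi _) p.1
      simpa using this
    simp only [hz, Finset.sum_const_zero]
    exact hε

end KAux

/-- Characterization of K-integrable functions on a closed brick `T = [a, b]`:
`f` is K-integrable iff it is bounded outside some Jordan null set and its
discontinuity points of the second kind form a Jordan null set. -/
theorem kIntegrable_iff_bounded_and_dis2_jordanNull {n : ℕ} (hn : 1 ≤ n)
    (a b : Fin n → ℝ) (hab : a ≤ b) (f : (Fin n → ℝ) → ℝ) :
    KIntegrable (Set.Icc a b) f ↔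
      ((∃ (N : Set (Fin n → ℝ)) (C : ℝ), JordanNull N ∧
          ∀ x ∈ Set.Icc a b \ N, |f x| ≤ C) ∧
        JordanNull (dis2 a b f)) := by
  classical
  constructor
  · rintro ⟨g, ⟨C0, hC0⟩, hnear⟩
    constructor
    · -- f is bounded outside a Jordan null set
      have hch : ∀ m : ℕ, ∃ (M : ℕ) (B : Fin M → Set (Fin n → ℝ)),
          (∀ j, IsBrick (B j) ∧ B j ⊆ Set.Icc a b) ∧ (∑ j, brickVol (B j)) < 1/((m:ℝ)+1) ∧
          TendstoUniformlyOn (fun m => (g m).fn) f atTop (Set.Icc a b \ ⋃ j, B j) :=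
        fun m => hnear (1/((m:ℝ)+1)) (by positivity)
      choose M B hB hvol huni using hch
      refine ⟨⋂ m, ⋃ j, B m j, C0 + 1, ?_, ?_⟩
      · intro ε hε
        obtain ⟨m, hm⟩ := exists_nat_one_div_lt hε
        exact ⟨M m, B m, fun j => (hB m j).1, Set.iInter_subset _ m, lt_trans (hvol m) hm⟩
      · rintro x ⟨hxT, hxN⟩
        have hxm : ∃ m, x ∉ ⋃ j, B m j := by
          by_contra hc; push_neg at hc; exact hxN (Set.mem_iInter.2 hc)
        obtain ⟨m, hm⟩ := hxm
        obtain ⟨m', hm'⟩ := (Metric.tendstoUniformlyOn_iff.1 (huni m) 1 one_pos).exists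
        have hd := hm' x ⟨hxT, hm⟩
        rw [Real.dist_eq] at hd
        have hb := hC0 m' x hxT
        have habs := abs_sub_abs_le_abs_sub (f x) ((g m').fn x)
        linarith
    · -- dis2 is Jordan null
      intro ε hε
      obtain ⟨M, B, hB, hvol, huni⟩ := hnear (ε/2) (by linarith)
      have henl : ∀ j : Fin M, ∃ O, IsBrick O ∧ IsOpen O ∧ closure (B j) ⊆ O ∧
          brickVol O < brickVol (B j) + ε/(2*((M:ℝ)+1)) :=
        fun j => KAux.exists_open_superbrick (hB j).1 (by positivity)
      choose O hO1 hO2 hO3 hO4 using henl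
      refine ⟨M, O, hO1, ?_, ?_⟩
      · intro x hx
        by_contra hxO
        obtain ⟨hxint, hxdisc, hxnolim⟩ := hx
        apply hxnolim
        intro α hα
        have hxIoo : x ∈ Set.univ.pi fun k => Set.Ioo (a k) (b k) := by
          rw [← KAux.interior_Icc_pi]; exact hxint
        have hxIcc : x ∈ Set.Icc a b := interior_subset hxint
        have hrj : ∀ j : Fin M, ∃ r > (0:ℝ), ∀ y ∈ B j, ¬ dist x y < r := by
          intro j
          have hxcl : x ∉ closure (B j) := fun hc => hxO (Set.mem_iUnion.2 ⟨j, hO3 j hc⟩)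
          rw [Metric.mem_closure_iff] at hxcl
          push_neg at hxcl
          obtain ⟨r, hr0, hr⟩ := hxcl
          exact ⟨r, hr0, fun y hy => not_lt.2 (hr y hy)⟩
        choose r hr0 hrmain using hrj
        obtain ⟨r0, hr0pos, hr0le⟩ := KAux.exists_pos_le_finite r hr0
        have hnb : (nhdsWithin x (dirSet a b x α)).NeBot := KAux.dir_neBot hxIoo α
        have hev : ∀ᶠ y in nhdsWithin x (dirSet a b x α), y ∈ Set.Icc a b \ ⋃ j, B j := by
          filter_upwards [self_mem_nhdsWithin,
            eventually_nhdsWithin_of_eventually_nhds (Metric.ball_mem_nhds x hr0pos)] with y hy hball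
          refine ⟨KAux.dirSet_subset_Icc hxIcc α hy, ?_⟩
          intro hc
          obtain ⟨j, hj⟩ := Set.mem_iUnion.1 hc
          apply hrmain j y hj
          have hby : dist y x < r0 := hball
          rw [dist_comm]
          exact lt_of_lt_of_le hby (hr0le j)
        exact KAux.exists_tendsto_of_unif hnb hev huni
          (fun m => KAux.steprepr_dir_limit (g m) a b x α)
      · have hMne : ((M:ℝ)+1) ≠ 0 := by positivity
        have hkey : ((M:ℝ)+1) * (ε/(2*((M:ℝ)+1))) = ε/2 := by field_simp
        have hMle : (M:ℝ) * (ε/(2*((M:ℝ)+1))) ≤ ε/2 := by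
          have hc : 0 < ε/(2*((M:ℝ)+1)) := by positivity
          nlinarith [Nat.cast_nonneg (α := ℝ) M]
        calc ∑ j, brickVol (O j)
            ≤ ∑ j, (brickVol (B j) + ε/(2*((M:ℝ)+1))) :=
              Finset.sum_le_sum fun j _ => le_of_lt (hO4 j)
          _ = (∑ j, brickVol (B j)) + (M:ℝ) * (ε/(2*((M:ℝ)+1))) := by
              rw [Finset.sum_add_distrib, Finset.sum_const, Finset.card_univ,
                Fintype.card_fin, nsmul_eq_mul]
          _ < ε/2 + ε/2 := by linarith
          _ = ε := by ring
  · rintro ⟨⟨N, C, hN, hbound⟩, hD⟩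
    set C' := max C 0 with hC'def
    have hC'0 : (0:ℝ) ≤ C' := le_max_right _ _
    have hNDB : JordanNull (N ∪ (dis2 a b f ∪
        (Set.Icc a b \ Set.univ.pi fun k => Set.Ioo (a k) (b k)))) :=
      KAux.JordanNull.union hN (KAux.JordanNull.union hD (KAux.jordanNull_boundary a b))
    have hcov : ∀ m : ℕ, ∃ (M : ℕ) (O : Fin M → Set (Fin n → ℝ)),
        (∀ j, IsBrick (O j)) ∧ (∀ j, IsOpen (O j)) ∧
        (N ∪ (dis2 a b f ∪
          (Set.Icc a b \ Set.univ.pi fun k => Set.Ioo (a k) (b k)))) ⊆ (⋃ j, O j) ∧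
        (∑ j, brickVol (O j)) < 1/((m:ℝ)+1) := by
      intro m
      obtain ⟨M, B, hB, hsub, hvol⟩ := hNDB (1/(2*((m:ℝ)+1))) (by positivity)
      have henl : ∀ j : Fin M, ∃ O, IsBrick O ∧ IsOpen O ∧ closure (B j) ⊆ O ∧
          brickVol O < brickVol (B j) + 1/(2*((m:ℝ)+1)*((M:ℝ)+1)) :=
        fun j => KAux.exists_open_superbrick (hB j) (by positivity)
      choose O hO1 hO2 hO3 hO4 using henl
      refine ⟨M, O, hO1, hO2,
        hsub.trans (Set.iUnion_mono fun j => subset_closure.trans (hO3 j)), ?_⟩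
      have hMne : ((M:ℝ)+1) ≠ 0 := by positivity
      have hMle : (M:ℝ) * (1/(2*((m:ℝ)+1)*((M:ℝ)+1))) ≤ 1/(2*((m:ℝ)+1)) := by
        rw [mul_one_div, div_le_div_iff₀ (by positivity) (by positivity)]
        nlinarith [Nat.cast_nonneg (α := ℝ) M, Nat.cast_nonneg (α := ℝ) m]
      calc ∑ j, brickVol (O j)
          ≤ ∑ j, (brickVol (B j) + 1/(2*((m:ℝ)+1)*((M:ℝ)+1))) :=
            Finset.sum_le_sum fun j _ => le_of_lt (hO4 j)
        _ = (∑ j, brickVol (B j)) + (M:ℝ) * (1/(2*((m:ℝ)+1)*((M:ℝ)+1))) := by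
            rw [Finset.sum_add_distrib, Finset.sum_const, Finset.card_univ,
              Fintype.card_fin, nsmul_eq_mul]
        _ < 1/(2*((m:ℝ)+1)) + 1/(2*((m:ℝ)+1)) := by linarith
        _ = 1/((m:ℝ)+1) := by field_simp; norm_num
    choose MM OO hBrick hOpen hsubm hvolm using hcov
    set V : ℕ → Set (Fin n → ℝ) := fun i => ⋃ j, OO i j with hVdef
    set K : ℕ → Set (Fin n → ℝ) :=
      fun m => Set.Icc a b \ ⋂ i ∈ Finset.range (m+1), V i with hKdef
    have hKcomp : ∀ m, IsCompact (K m) := by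
      intro m
      apply IsCompact.of_isClosed_subset (isCompact_Icc (a := a) (b := b))
      · exact (isClosed_Icc).sdiff
          (isOpen_biInter_finset fun i _ => isOpen_iUnion fun j => hOpen i j)
      · exact Set.diff_subset
    have hKprop : ∀ m, ∀ x ∈ K m, x ∈ Set.Icc a b ∧ x ∉ N ∧ x ∉ dis2 a b f ∧
        x ∈ Set.univ.pi fun k => Set.Ioo (a k) (b k) := by
      intro m x hx
      obtain ⟨hxI, hxV⟩ := hx
      have hex : ∃ i ∈ Finset.range (m+1), x ∉ V i := by
        by_contra hc; push_neg at hc; exact hxV (Set.mem_iInter₂.2 hc)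
      obtain ⟨i, _, hxVi⟩ := hex
      refine ⟨hxI, fun hc => hxVi (hsubm i (Set.mem_union_left _ hc)),
        fun hc => hxVi (hsubm i (Set.mem_union_right _ (Set.mem_union_left _ hc))), ?_⟩
      by_contra hc
      exact hxVi (hsubm i (Set.mem_union_right _ (Set.mem_union_right _ ⟨hxI, hc⟩)))
    have hfC : ∀ m, ∀ x ∈ K m, |f x| ≤ C' := fun m x hx =>
      le_trans (hbound x ⟨(hKprop m x hx).1, (hKprop m x hx).2.1⟩) (le_max_left _ _)
    have hlimK : ∀ m, ∀ x ∈ K m, ∀ α : Fin n → SignType, (∃ k, α k ≠ SignType.zero) →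
        ∃ L, Filter.Tendsto f (nhdsWithin x (dirSet a b x α)) (nhds L) := by
      intro m x hx α hα
      obtain ⟨hxI, hxN, hxD, hxIoo⟩ := hKprop m x hx
      have hxint : x ∈ interior (Set.Icc a b) := by
        rw [KAux.interior_Icc_pi]; exact hxIoo
      by_cases hcont : ContinuousWithinAt f (Set.Icc a b) x
      · exact ⟨f x, hcont.mono_left (nhdsWithin_mono x (KAux.dirSet_subset_Icc hxI α))⟩
      · have hall : ∀ β : Fin n → SignType, (∃ k, β k ≠ SignType.zero) →
            ∃ L, HasDirLimit a b f x β L := by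
          by_contra hc
          exact hxD ⟨hxint, hcont, hc⟩
        exact hall α hα
    have happ : ∀ m : ℕ, ∃ gm, KAux.IsStep (Set.Icc a b) gm ∧ (∀ y, |gm y| ≤ C') ∧
        ∀ y ∈ K m, |gm y - f y| ≤ 1/((m:ℝ)+1) :=
      fun m => KAux.approx (hKcomp m) (fun x hx => (hKprop m x hx).2.2.2) hC'0 (hfC m)
        (hlimK m) (by positivity)
    choose gm hstep hbnd hacc using happ
    choose rp hrp using hstep
    refine ⟨rp, ⟨C', fun m x _ => by
      show |(rp m).fn x| ≤ C'
      rw [hrp m]; exact hbnd m x⟩, ?_⟩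
    intro δ hδ
    obtain ⟨i0, hi0⟩ := exists_nat_one_div_lt hδ
    refine ⟨MM i0, fun j => OO i0 j ∩ Set.Icc a b,
      fun j => ⟨KAux.brick_inter (hBrick i0 j) (KAux.isBrick_Icc a b),
        Set.inter_subset_right⟩, ?_, ?_⟩
    · calc ∑ j, brickVol (OO i0 j ∩ Set.Icc a b)
          ≤ ∑ j, brickVol (OO i0 j) :=
            Finset.sum_le_sum fun j _ => KAux.brickVol_mono (hBrick i0 j) Set.inter_subset_left
        _ < 1/((i0:ℝ)+1) := hvolm i0
        _ < δ := hi0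
    · rw [Metric.tendstoUniformlyOn_iff]
      intro ε' hε'
      obtain ⟨m1, hm1⟩ := exists_nat_one_div_lt hε'
      filter_upwards [Filter.eventually_ge_atTop (max i0 m1)] with m hm
      intro y hy
      have hyV : y ∉ V i0 := by
        intro hc
        obtain ⟨j, hj⟩ := Set.mem_iUnion.1 hc
        exact hy.2 (Set.mem_iUnion.2 ⟨j, ⟨hj, hy.1⟩⟩)
      have hyK : y ∈ K m := by
        refine ⟨hy.1, fun hc => hyV ?_⟩
        have hi0m : i0 ∈ Finset.range (m+1) :=
          Finset.mem_range.2 (Nat.lt_succ_of_le (le_of_max_le_left hm))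
        exact Set.mem_iInter₂.1 hc i0 hi0m
      have hd := hacc m y hyK
      show dist (f y) ((rp m).fn y) < ε'
      rw [hrp m, Real.dist_eq]
      have h1 : (1:ℝ)/((m:ℝ)+1) ≤ 1/((m1:ℝ)+1) := by
        apply one_div_le_one_div_of_le (by positivity)
        have hm1m : m1 ≤ m := le_of_max_le_right hm
        have : (m1:ℝ) ≤ (m:ℝ) := Nat.cast_le.2 hm1m
        linarith
      calc |f y - gm m y| = |gm m y - f y| := abs_sub_comm _ _
        _ ≤ 1/((m:ℝ)+1) := hd
        _ ≤ 1/((m1:ℝ)+1) := h1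
        _ < ε' := hm1
end
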